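/- arXiv:1702.05074 — 13 statements merged into one kernel-verified Lean document; each statement's English description precedes it below -/
import Mathlib

section
/- Let m ≥ 1 and 1 ≤ r ≤ m be integers. For every coefficient vector a (assigning an element of F₂ to each r-element subset of [m]), every r-element subset R of [m], and every subset S of [m] \ R, the sum over all subsets R₀ of R of f_a(R₀ ∪ S) equals a(R); that is, ∑_{R₀ ⊆ R} f_a(R₀ ∪ S) = a(R). -/
/-! Exchanging the two sums, `a T` is counted once for each `R₀ ⊆ R` with `T ⊆ R₀ ∪ S`, i.e. for
each `R₀` in the interval `[T \ S, R]`, which has `2 ^ (#R - #(T \ S))` elements. Over `𝔽₂` only the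
terms with `T \ S = R` survive, and since `#T = #R` this forces `T = R`, whose count is `1` because
`R` and `S` are disjoint. -/

open Finset

namespace Finset

variable {α : Type*} [DecidableEq α]

theorem filter_powerset_subset_union_eq_Icc (R S T : Finset α) :
    R.powerset.filter (fun R₀ => T ⊆ R₀ ∪ S) = Icc (T \ S) R := by
  ext R₀
  simp only [mem_filter, mem_powerset, mem_Icc, ← sup_eq_union, sdiff_le_iff', and_comm]

theorem card_filter_powerset_subset_union {R S T : Finset α} (hT : T ⊆ R ∪ S) :
    #(R.powerset.filter (fun R₀ => T ⊆ R₀ ∪ S)) = 2 ^ (#R - #(T \ S)) := by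
  rw [filter_powerset_subset_union_eq_Icc,
    card_Icc_finset (sdiff_le_iff'.2 hT)]

theorem sum_powerset_sum_filter_powerset_union {M : Type*} [AddCommMonoid M]
    (p : Finset α → Prop) [DecidablePred p] (f : Finset α → M) (R S : Finset α) :
    ∑ R₀ ∈ R.powerset, ∑ T ∈ (R₀ ∪ S).powerset.filter p, f T =
      ∑ T ∈ (R ∪ S).powerset.filter p, 2 ^ (#R - #(T \ S)) • f T := by
  have restrict : ∀ R₀ ∈ R.powerset, ∑ T ∈ (R₀ ∪ S).powerset.filter p, f T =
      ∑ T ∈ (R ∪ S).powerset.filter p, if T ⊆ R₀ ∪ S then f T else 0 := by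
    intro R₀ hR₀
    rw [← sum_filter, filter_filter]
    refine sum_congr (ext fun T => ?_) fun _ _ => rfl
    simp only [mem_filter, mem_powerset]
    exact ⟨fun ⟨hT, hp⟩ => ⟨hT.trans (union_subset_union_left (mem_powerset.1 hR₀)), hp, hT⟩,
      fun ⟨_, hp, hT⟩ => ⟨hT, hp⟩⟩
  rw [sum_congr rfl restrict, sum_comm]
  refine sum_congr rfl fun T hT => ?_
  rw [← sum_filter, sum_const,
    card_filter_powerset_subset_union (mem_powerset.1 (mem_filter.1 hT).1)]

end Finset

theorem stmt_0_general (m r : ℕ)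
    (a : Finset (Fin m) → ZMod 2)
    (R : Finset (Fin m)) (hR : R.card = r)
    (S : Finset (Fin m)) (hS : S ⊆ Finset.univ \ R) :
    ∑ R₀ ∈ R.powerset,
      (∑ T ∈ (R₀ ∪ S).powerset.filter (fun T => T.card = r), a T) = a R := by
  have hRS : Disjoint R S := disjoint_of_subset_right hS disjoint_sdiff
  rw [sum_powerset_sum_filter_powerset_union]
  have hR_mem : R ∈ (R ∪ S).powerset.filter (fun T => T.card = r) :=
    mem_filter.2 ⟨mem_powerset.2 subset_union_left, hR⟩
  rw [sum_eq_single_of_mem R hR_mem, hRS.sdiff_eq_left, Nat.sub_self, pow_zero, one_smul]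
  intro T hT hTR
  obtain ⟨hTRS, hTr⟩ := mem_filter.1 hT
  have hTS_ssub : T \ S ⊂ R := by
    refine (sdiff_le_iff'.2 (mem_powerset.1 hTRS) : T \ S ⊆ R).ssubset_of_ne ?_
    rintro hTS
    exact hTR ((eq_of_superset_of_card_ge sdiff_subset (by rw [hTS]; omega)).trans hTS)
  obtain ⟨k, hk⟩ := Nat.exists_eq_succ_of_ne_zero (Nat.sub_pos_of_lt (card_lt_card hTS_ssub)).ne'
  rw [hk, pow_succ, mul_smul, two_nsmul, ZModModule.add_self, smul_zero]

/-- For every coefficient vector `a`, every `r`-element subset `R` of `[m]`,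
and every subset `S ⊆ [m] \ R`, `∑_{R₀ ⊆ R} f_a(R₀ ∪ S) = a(R)`, where
`f_a(X) = ∑_{T ⊆ X, |T| = r} a(T)`. -/
theorem stmt_0 (m r : ℕ) (hm : 1 ≤ m) (hr : 1 ≤ r) (hrm : r ≤ m)
    (a : Finset (Fin m) → ZMod 2)
    (R : Finset (Fin m)) (hR : R.card = r)
    (S : Finset (Fin m)) (hS : S ⊆ Finset.univ \ R) :
    ∑ R₀ ∈ R.powerset,
      (∑ T ∈ (R₀ ∪ S).powerset.filter (fun T => T.card = r), a T) = a R :=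
  stmt_0_general m r a R hR S hS
end

section
/- Let m ≥ 1 and 1 ≤ r ≤ m be integers and set ℓ = m − r. The binary shortened projective Reed–Muller code PRM(r, m−1) is a systematic (n, k) 2^ℓ-server PIR code with n = ∑_{i=r}^{m} C(m,i) and k = C(m,r): for every r-element subset R of [m] there exist 2^ℓ pairwise disjoint nonempty families F₁,…,F_{2^ℓ} of subsets of [m] of cardinality ≥ r such that for every coefficient vector a and every t ∈ {1,…,2^ℓ}, ∑_{S ∈ F_t} f_a(S) = a(R), and one of these families is the singleton {R} (so the code is systematic). -/
/-!
Fix `R` with `|R| = r`. For every `U` disjoint from `R`, the sets `V` with `U ⊆ V ⊆ R ∪ U`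
recover `a(R)`: summing `f_a` over this interval counts each monomial `T ⊆ R ∪ U` of degree `r`
once for every `V` in the interval `[U ∪ T, R ∪ U]`, i.e. `2 ^ |(R ∪ U) \ (U ∪ T)|` times, which
is odd only when `U ∪ T = R ∪ U`, that is `T = R`. Sets `V` with `|V| < r` contribute nothing and
may be dropped. The `2 ^ (m - r)` choices `U ⊆ [m] \ R` give disjoint families, since `U = V \ R`
is determined by any of its members, and `U = ∅` gives the systematic family `{R}`.
-/

open Finset

namespace ProjectiveReedMuller

variable {α : Type*}

/-- The evaluation `f_a(S)` of `∑_{|T| = r} a(T) ∏_{i ∈ T} x_i` at the indicator vector of `S`. -/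
def eval {M : Type*} [AddCommMonoid M] (r : ℕ) (a : Finset α → M) (S : Finset α) : M :=
  ∑ T ∈ S.powerset.filter (fun T => T.card = r), a T

section AddCommMonoid

variable {M : Type*} [AddCommMonoid M]

theorem eval_eq_sum_powersetCard (r : ℕ) (a : Finset α → M) (S : Finset α) :
    eval r a S = ∑ T ∈ S.powersetCard r, a T := by
  rw [eval, powersetCard_eq_filter]

theorem eval_eq_zero_of_card_lt {r : ℕ} (a : Finset α → M) {S : Finset α} (h : S.card < r) :
    eval r a S = 0 := by
  rw [eval_eq_sum_powersetCard, powersetCard_eq_empty.2 h, sum_empty]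

variable [DecidableEq α]

theorem sum_eval_Icc (r : ℕ) (a : Finset α → M) {U W : Finset α} (hUW : U ⊆ W) :
    ∑ V ∈ Icc U W, eval r a V = ∑ T ∈ W.powersetCard r, 2 ^ (W.card - (U ∪ T).card) • a T := by
  simp_rw [eval_eq_sum_powersetCard]
  rw [sum_comm' (t' := W.powersetCard r) (s' := fun T => Icc (U ∪ T) W)]
  · refine sum_congr rfl fun T hT => ?_
    rw [sum_const, card_Icc_finset (union_subset hUW (mem_powersetCard.1 hT).1)]
  · intro V T
    simp only [mem_Icc, mem_powersetCard, union_subset_iff]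
    constructor
    · rintro ⟨⟨hUV, hVW⟩, hTV, hT⟩
      exact ⟨⟨⟨hUV, hTV⟩, hVW⟩, hTV.trans hVW, hT⟩
    · rintro ⟨⟨⟨hUV, hTV⟩, hVW⟩, -, hT⟩
      exact ⟨⟨hUV, hVW⟩, hTV, hT⟩

end AddCommMonoid

variable [DecidableEq α]

def recoverySet (R U : Finset α) : Finset (Finset α) :=
  (Icc U (R ∪ U)).filter (fun V => R.card ≤ V.card)

theorem union_mem_recoverySet (R U : Finset α) : R ∪ U ∈ recoverySet R U := by
  simp only [recoverySet, mem_filter, mem_Icc]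
  exact ⟨⟨subset_union_right, subset_rfl⟩, card_le_card subset_union_left⟩

theorem recoverySet_empty (R : Finset α) : recoverySet R ∅ = {R} := by
  ext V
  simp only [recoverySet, mem_filter, mem_Icc, empty_subset, true_and, union_empty,
    mem_singleton]
  exact ⟨fun ⟨hVR, hRV⟩ => eq_of_subset_of_card_le hVR hRV,
    fun h => ⟨h.le, (congrArg card h).ge⟩⟩

theorem sdiff_eq_of_mem_recoverySet {R U V : Finset α} (hUR : Disjoint U R)
    (hV : V ∈ recoverySet R U) : V \ R = U := by
  obtain ⟨⟨hUV, hVRU⟩, -⟩ := mem_filter.1 hV |>.imp_left mem_Icc.1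
  apply Subset.antisymm
  · exact sdiff_le_iff.2 hVRU
  · exact subset_sdiff.2 ⟨hUV, hUR⟩

theorem disjoint_recoverySet {R U U' : Finset α} (hUR : Disjoint U R) (hU'R : Disjoint U' R)
    (hne : U ≠ U') : Disjoint (recoverySet R U) (recoverySet R U') :=
  disjoint_left.2 fun _ hV hV' =>
    hne ((sdiff_eq_of_mem_recoverySet hUR hV).symm.trans (sdiff_eq_of_mem_recoverySet hU'R hV'))

theorem sum_eval_recoverySet {K : Type*} [Ring K] [CharP K 2] (a : Finset α → K)
    {R U : Finset α} (hUR : Disjoint U R) :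
    ∑ V ∈ recoverySet R U, eval R.card a V = a R := by
  rw [recoverySet, sum_filter_of_ne fun V _ h => not_lt.1 (mt (eval_eq_zero_of_card_lt a) h),
    sum_eval_Icc _ _ subset_union_right]
  refine (sum_eq_single_of_mem R (mem_powersetCard.2 ⟨subset_union_left, rfl⟩) ?_).trans ?_
  · intro T hT hTR
    obtain ⟨hT, hTcard⟩ := mem_powersetCard.1 hT
    have hssub : U ∪ T ⊂ R ∪ U := by
      refine (union_subset subset_union_right hT).ssubset_of_ne fun h => hTR ?_
      have hRT : R ⊆ T := fun x hx =>
        ((mem_union.1 (h ▸ mem_union_left U hx)).resolve_left (disjoint_right.1 hUR hx))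
      exact (eq_of_subset_of_card_le hRT hTcard.le).symm
    have hexp : (R ∪ U).card - (U ∪ T).card ≠ 0 :=
      Nat.sub_ne_zero_of_lt (card_lt_card hssub)
    rw [nsmul_eq_mul, Nat.cast_pow, Nat.cast_ofNat, CharTwo.two_eq_zero, zero_pow hexp,
      zero_mul]
  · rw [union_comm U R, Nat.sub_self, pow_zero, one_smul]

end ProjectiveReedMuller

open ProjectiveReedMuller

theorem card_filter_le_card_eq_sum_choose {α : Type*} [Fintype α] (r : ℕ) :
    (univ.filter (fun S : Finset α => r ≤ S.card)).card
      = ∑ i ∈ Icc r (Fintype.card α), (Fintype.card α).choose i := by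
  rw [card_eq_sum_card_fiberwise (f := card) (t := Icc r (Fintype.card α))]
  · refine sum_congr rfl fun i hi => ?_
    rw [filter_filter, filter_congr fun S _ => and_iff_right_of_imp fun h => h ▸ (mem_Icc.1 hi).1,
      ← powerset_univ, ← powersetCard_eq_filter, card_powersetCard, card_univ]
  · intro S hS
    exact mem_Icc.2 ⟨(mem_filter.1 hS).2, card_le_univ S⟩

theorem stmt_2_general (m r : ℕ) :
    ((Finset.univ.filter (fun S : Finset (Fin m) => r ≤ S.card)).card
        = ∑ i ∈ Finset.Icc r m, m.choose i) ∧
    ((Finset.univ.filter (fun S : Finset (Fin m) => S.card = r)).card = m.choose r) ∧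
    (∀ R : Finset (Fin m), R.card = r →
      ∃ F : Fin (2 ^ (m - r)) → Finset (Finset (Fin m)),
        (∀ t, (F t).Nonempty) ∧
        (∀ t, ∀ S ∈ F t, r ≤ S.card) ∧
        (∀ t₁ t₂, t₁ ≠ t₂ → Disjoint (F t₁) (F t₂)) ∧
        (∀ a : Finset (Fin m) → ZMod 2, ∀ t,
          ∑ S ∈ F t, (∑ T ∈ S.powerset.filter (fun T => T.card = r), a T) = a R) ∧
        (∃ t, F t = {R})) := by
  refine ⟨by simpa using card_filter_le_card_eq_sum_choose (α := Fin m) r,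
    by rw [← powerset_univ, ← powersetCard_eq_filter, card_powersetCard, card_univ,
      Fintype.card_fin], ?_⟩
  rintro R rfl
  have hcard : Rᶜ.powerset.card = 2 ^ (m - R.card) := by
    rw [card_powerset, card_compl, Fintype.card_fin]
  let e := Rᶜ.powerset.equivFinOfCardEq hcard
  have hdisj : ∀ t, Disjoint (e.symm t : Finset (Fin m)) R := fun t =>
    subset_compl_iff_disjoint_right.1 (mem_powerset.1 (e.symm t).2)
  refine ⟨fun t => recoverySet R (e.symm t), fun t => ⟨_, union_mem_recoverySet _ _⟩,
    fun t S hS => (mem_filter.1 hS).2,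
    fun t₁ t₂ hne => disjoint_recoverySet (hdisj t₁) (hdisj t₂)
      (Subtype.coe_injective.ne (e.symm.injective.ne hne)),
    fun a t => sum_eval_recoverySet a (hdisj t), e ⟨∅, empty_mem_powerset _⟩, ?_⟩
  simp only [Equiv.symm_apply_apply, recoverySet_empty]

/-- The binary shortened projective Reed–Muller code PRM(r, m−1) is a
systematic (n, k) 2^(m−r)-server PIR code with `n = ∑_{i=r}^m C(m,i)` and `k = C(m,r)`:
each message symbol `a(R)` has `2^(m-r)` pairwise disjoint nonempty recovery families of
coordinates (subsets of `[m]` of cardinality ≥ r), one of which is the singleton `{R}`. -/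
theorem stmt_2 (m r : ℕ) (hm : 1 ≤ m) (hr : 1 ≤ r) (hrm : r ≤ m) :
    ((Finset.univ.filter (fun S : Finset (Fin m) => r ≤ S.card)).card
        = ∑ i ∈ Finset.Icc r m, m.choose i) ∧
    ((Finset.univ.filter (fun S : Finset (Fin m) => S.card = r)).card = m.choose r) ∧
    (∀ R : Finset (Fin m), R.card = r →
      ∃ F : Fin (2 ^ (m - r)) → Finset (Finset (Fin m)),
        (∀ t, (F t).Nonempty) ∧
        (∀ t, ∀ S ∈ F t, r ≤ S.card) ∧
        (∀ t₁ t₂, t₁ ≠ t₂ → Disjoint (F t₁) (F t₂)) ∧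
        (∀ a : Finset (Fin m) → ZMod 2, ∀ t,
          ∑ S ∈ F t, (∑ T ∈ S.powerset.filter (fun T => T.card = r), a T) = a R) ∧
        (∃ t, F t = {R})) :=
  stmt_2_general m r
end

section
/- Let m ≥ 1 and 1 ≤ r ≤ m be integers and let Γ be any set of r-element subsets of [m] (the message symbols set to zero). Call a subset S of [m] with |S| ≥ r deleted if every r-element subset of S belongs to Γ. Then for every r-element subset R of [m] with R ∉ Γ and every subset S of [m] \ R: (i) the set R ∪ S is not deleted, so the family {R₀ ∪ S : R₀ ⊆ R, |R₀ ∪ S| ≥ r} contains at least one non-deleted coordinate; and (ii) for every coefficient vector a vanishing on Γ, the sum of f_a over the non-deleted members of this family equals a(R). Consequently the shortened code retains 2^{m−r} pairwise disjoint nonempty recovery sets for every remaining message symbol. -/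
/-!
Coefficients vanish on `Γ`, so a deleted coordinate, like one of size `< r`, evaluates to `0`:
the sum over the non-deleted members of the family is the sum of `f_a (R₀ ∪ S)` over all
`R₀ ⊆ R`. In that sum an `r`-set `T ⊆ R ∪ S` is counted once for every `R₀` with
`T \ S ⊆ R₀ ⊆ R`, that is `2 ^ (|R| - |T \ S|)` times, an odd number only for `T = R`.
Distinct `S` give disjoint families since every member `A` of the family of `S` has `A \ R = S`.
-/

open Finset

variable {α M : Type*} [AddCommMonoid M]

lemma two_pow_nsmul_eq_zero [Module (ZMod 2) M] {k : ℕ} (hk : k ≠ 0) (x : M) : 2 ^ k • x = 0 := by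
  rw [← Nat.cast_smul_eq_nsmul (ZMod 2), Nat.cast_pow, Nat.cast_ofNat,
    show (2 : ZMod 2) = 0 from rfl, zero_pow hk, zero_smul]

def rmEval (r : ℕ) (a : Finset α → M) (A : Finset α) : M :=
  ∑ T ∈ A.powerset.filter (fun T => T.card = r), a T

def IsDeleted (Γ : Finset (Finset α)) (r : ℕ) (A : Finset α) : Prop :=
  ∀ T ∈ A.powerset, T.card = r → T ∈ Γ

variable {Γ : Finset (Finset α)} {r : ℕ} {a : Finset α → M} {A R S : Finset α}

lemma rmEval_eq_zero_of_card_lt (h : #A < r) : rmEval r a A = 0 :=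
  sum_eq_zero fun _ hT => absurd (mem_filter.mp hT).2
    ((card_le_card (mem_powerset.mp (mem_filter.mp hT).1)).trans_lt h).ne

lemma rmEval_eq_zero_of_isDeleted (ha : ∀ T ∈ Γ, a T = 0) (h : IsDeleted Γ r A) :
    rmEval r a A = 0 :=
  sum_eq_zero fun T hT => ha T (h T (mem_filter.mp hT).1 (mem_filter.mp hT).2)

lemma not_isDeleted_of_subset (hRA : R ⊆ A) (hR : #R = r) (hRΓ : R ∉ Γ) :
    ¬ IsDeleted Γ r A :=
  fun h => hRΓ (h R (mem_powerset.mpr hRA) hR)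

variable [DecidableEq α]

lemma card_filter_powerset_subset_union {T : Finset α} (hT : T \ S ⊆ R) :
    #{R₀ ∈ R.powerset | T ⊆ R₀ ∪ S} = 2 ^ (#R - #(T \ S)) := by
  have : {R₀ ∈ R.powerset | T ⊆ R₀ ∪ S} = Icc (T \ S) R := by
    ext R₀
    rw [mem_filter, mem_powerset, mem_Icc]
    exact and_comm.trans (and_congr_left' sdiff_le_iff'.symm)
  rw [this, card_Icc_finset hT]

lemma card_sdiff_lt_of_ne {T : Finset α} (hTR : T \ S ⊆ R) (hcard : #T = #R) (hne : T ≠ R) :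
    #(T \ S) < #R := by
  refine (card_le_card hTR).lt_of_ne fun h => hne ?_
  have hRT : R ⊆ T := eq_of_subset_of_card_le hTR h.ge ▸ sdiff_subset
  exact (eq_of_subset_of_card_le hRT hcard.le).symm

instance (Γ : Finset (Finset α)) (r : ℕ) (A : Finset α) : Decidable (IsDeleted Γ r A) :=
  inferInstanceAs (Decidable (∀ T ∈ A.powerset, T.card = r → T ∈ Γ))

def recoverySet (Γ : Finset (Finset α)) (r : ℕ) (R S : Finset α) : Finset (Finset α) :=
  (R.powerset.image (fun R₀ => R₀ ∪ S)).filter (fun A => r ≤ A.card ∧ ¬ IsDeleted Γ r A)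

lemma union_mem_recoverySet (hR : #R = r) (hRΓ : R ∉ Γ) : R ∪ S ∈ recoverySet Γ r R S :=
  mem_filter.mpr ⟨mem_image.mpr ⟨R, mem_powerset_self R, rfl⟩,
    hR ▸ card_le_card subset_union_left, not_isDeleted_of_subset subset_union_left hR hRΓ⟩

lemma sdiff_eq_of_mem_recoverySet (hSR : Disjoint S R) (hA : A ∈ recoverySet Γ r R S) :
    A \ R = S := by
  obtain ⟨R₀, hR₀, rfl⟩ := mem_image.mp (mem_filter.mp hA).1
  rw [union_sdiff_distrib, sdiff_eq_empty_iff_subset.mpr (mem_powerset.mp hR₀), empty_union,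
    sdiff_eq_self_of_disjoint hSR]

lemma disjoint_recoverySet {S₁ S₂ : Finset α} (hS₁ : Disjoint S₁ R) (hS₂ : Disjoint S₂ R)
    (hne : S₁ ≠ S₂) : Disjoint (recoverySet Γ r R S₁) (recoverySet Γ r R S₂) :=
  disjoint_left.mpr fun _ h₁ h₂ =>
    hne ((sdiff_eq_of_mem_recoverySet hS₁ h₁).symm.trans (sdiff_eq_of_mem_recoverySet hS₂ h₂))

lemma sum_powerset_rmEval_union [Module (ZMod 2) M] (hRS : Disjoint R S) (hR : #R = r)
    (a : Finset α → M) : ∑ R₀ ∈ R.powerset, rmEval r a (R₀ ∪ S) = a R := by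
  set 𝒯 := (R ∪ S).powerset.filter (fun T => T.card = r)
  have hrestrict : ∀ R₀ ∈ R.powerset,
      rmEval r a (R₀ ∪ S) = ∑ T ∈ 𝒯, if T ⊆ R₀ ∪ S then a T else 0 := by
    intro R₀ hR₀
    rw [rmEval, ← sum_filter]
    congr 1
    ext T
    simp only [𝒯, mem_filter, mem_powerset]
    exact ⟨fun h => ⟨⟨h.1.trans (union_subset_union_left (mem_powerset.mp hR₀)), h.2⟩, h.1⟩,
      fun h => ⟨h.2, h.1.2⟩⟩
  have hsdiff : ∀ T ∈ 𝒯, T \ S ⊆ R := fun T hT =>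
    sdiff_le_iff'.mpr (mem_powerset.mp (mem_filter.mp hT).1)
  calc ∑ R₀ ∈ R.powerset, rmEval r a (R₀ ∪ S)
      = ∑ T ∈ 𝒯, ∑ R₀ ∈ R.powerset, if T ⊆ R₀ ∪ S then a T else 0 := by
        rw [sum_congr rfl hrestrict, sum_comm]
    _ = ∑ T ∈ 𝒯, 2 ^ (#R - #(T \ S)) • a T := by
        refine sum_congr rfl fun T hT => ?_
        rw [← sum_filter, sum_const, card_filter_powerset_subset_union (hsdiff T hT)]
    _ = a R := by
        rw [sum_eq_single R, sdiff_eq_self_of_disjoint hRS, Nat.sub_self, pow_zero, one_smul]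
        · intro T hT hne
          refine two_pow_nsmul_eq_zero (Nat.sub_ne_zero_of_lt ?_) _
          exact card_sdiff_lt_of_ne (hsdiff T hT) ((mem_filter.mp hT).2.trans hR.symm) hne
        · exact fun h => (h (mem_filter.mpr ⟨mem_powerset.mpr subset_union_left, hR⟩)).elim

lemma sum_recoverySet_rmEval [Module (ZMod 2) M]
    (hRS : Disjoint R S) (hR : #R = r) (ha : ∀ T ∈ Γ, a T = 0) :
    ∑ A ∈ recoverySet Γ r R S, rmEval r a A = a R := by
  have hinj : Set.InjOn (fun R₀ => R₀ ∪ S) R.powerset := fun R₀ h₀ R₁ h₁ h => by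
    rw [← union_sdiff_cancel_right (hRS.mono_left (mem_powerset.mp h₀)), ← union_sdiff_cancel_right
      (hRS.mono_left (mem_powerset.mp h₁))]
    exact congrArg (· \ S) h
  rw [recoverySet, sum_filter_of_ne, sum_image hinj, sum_powerset_rmEval_union hRS hR]
  exact fun A _ hA => ⟨le_of_not_gt fun h => hA (rmEval_eq_zero_of_card_lt h),
    fun h => hA (rmEval_eq_zero_of_isDeleted ha h)⟩

theorem stmt_4_general (m r : ℕ) (Γ : Finset (Finset (Fin m))) :
    (∀ R : Finset (Fin m), R.card = r → R ∉ Γ →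
      ∀ S : Finset (Fin m), S ⊆ Finset.univ \ R →
        ((¬ ∀ T ∈ (R ∪ S).powerset, T.card = r → T ∈ Γ) ∧
          (∃ A ∈ (R.powerset.image (fun R₀ => R₀ ∪ S)).filter (fun A => r ≤ A.card),
            ¬ ∀ T ∈ A.powerset, T.card = r → T ∈ Γ) ∧
          (∀ a : Finset (Fin m) → ZMod 2, (∀ T ∈ Γ, a T = 0) →
            ∑ A ∈ (R.powerset.image (fun R₀ => R₀ ∪ S)).filter
                (fun A => r ≤ A.card ∧ ¬ ∀ T ∈ A.powerset, T.card = r → T ∈ Γ),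
              (∑ T ∈ A.powerset.filter (fun T => T.card = r), a T) = a R))) ∧
    (∀ R : Finset (Fin m), R.card = r → R ∉ Γ →
      ∃ F : Fin (2 ^ (m - r)) → Finset (Finset (Fin m)),
        (∀ t, (F t).Nonempty) ∧
        (∀ t, ∀ A ∈ F t, r ≤ A.card ∧ ¬ ∀ T ∈ A.powerset, T.card = r → T ∈ Γ) ∧
        (∀ t₁ t₂, t₁ ≠ t₂ → Disjoint (F t₁) (F t₂)) ∧
        (∀ a : Finset (Fin m) → ZMod 2, (∀ T ∈ Γ, a T = 0) →
          ∀ t, ∑ A ∈ F t, (∑ T ∈ A.powerset.filter (fun T => T.card = r), a T) = a R)) := by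
  -- The statement decides `∀ T ∈ A.powerset, …` through `Fintype (Finset (Fin m))`, so its
  -- filter is `recoverySet` only up to the `Decidable` instance.
  have hrec (R S : Finset (Fin m)) : (R.powerset.image (fun R₀ => R₀ ∪ S)).filter
      (fun A => r ≤ A.card ∧ ¬ ∀ T ∈ A.powerset, T.card = r → T ∈ Γ) = recoverySet Γ r R S := by
    unfold recoverySet IsDeleted
    congr!
  simp only [hrec]
  refine ⟨fun R hR hRΓ S hS => ?_, fun R hR hRΓ => ?_⟩
  · have hRS : Disjoint R S := (subset_sdiff.mp hS).2.symm
    obtain ⟨hmem, hsize, hlive⟩ := mem_filter.mp (union_mem_recoverySet (S := S) hR hRΓ)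
    exact ⟨hlive, ⟨R ∪ S, mem_filter.mpr ⟨hmem, hsize⟩, hlive⟩,
      fun a ha => sum_recoverySet_rmEval hRS hR ha⟩
  · have hcard : #(univ \ R).powerset = 2 ^ (m - r) := by
      rw [card_powerset, card_univ_sdiff, Fintype.card_fin, hR]
    let e := (equivFinOfCardEq hcard).symm
    have hdisj : ∀ t, Disjoint R (e t) := fun t =>
      (subset_sdiff.mp (mem_powerset.mp (e t).2)).2.symm
    exact ⟨fun t => recoverySet Γ r R (e t), fun t => ⟨_, union_mem_recoverySet hR hRΓ⟩,
      fun t A hA => (mem_filter.mp hA).2,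
      fun t₁ t₂ hne => disjoint_recoverySet (hdisj t₁).symm (hdisj t₂).symm
        fun h => hne (e.injective (Subtype.ext h)),
      fun a ha t => sum_recoverySet_rmEval (hdisj t) hR ha⟩

/-- Shortening PRM(r, m−1) by a set `Γ` of r-element subsets.  A coordinate
`S` (with `|S| ≥ r`) is deleted when all of its r-element subsets lie in `Γ`.  For every
r-set `R ∉ Γ` and every `S ⊆ [m] \ R`: (i) `R ∪ S` is not deleted, so the recovery family
`{R₀ ∪ S : R₀ ⊆ R, |R₀ ∪ S| ≥ r}` contains a non-deleted coordinate; (ii) for every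
coefficient vector `a` vanishing on `Γ`, the sum of `f_a` over the non-deleted members of
this family equals `a(R)`.  Consequently the shortened code retains `2^(m−r)` pairwise
disjoint nonempty recovery sets for every remaining message symbol. -/
theorem stmt_4 (m r : ℕ) (hm : 1 ≤ m) (hr : 1 ≤ r) (hrm : r ≤ m)
    (Γ : Finset (Finset (Fin m))) (hΓ : ∀ T ∈ Γ, T.card = r) :
    (∀ R : Finset (Fin m), R.card = r → R ∉ Γ →
      ∀ S : Finset (Fin m), S ⊆ Finset.univ \ R →
        ((¬ ∀ T ∈ (R ∪ S).powerset, T.card = r → T ∈ Γ) ∧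
          (∃ A ∈ (R.powerset.image (fun R₀ => R₀ ∪ S)).filter (fun A => r ≤ A.card),
            ¬ ∀ T ∈ A.powerset, T.card = r → T ∈ Γ) ∧
          (∀ a : Finset (Fin m) → ZMod 2, (∀ T ∈ Γ, a T = 0) →
            ∑ A ∈ (R.powerset.image (fun R₀ => R₀ ∪ S)).filter
                (fun A => r ≤ A.card ∧ ¬ ∀ T ∈ A.powerset, T.card = r → T ∈ Γ),
              (∑ T ∈ A.powerset.filter (fun T => T.card = r), a T) = a R))) ∧
    (∀ R : Finset (Fin m), R.card = r → R ∉ Γ →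
      ∃ F : Fin (2 ^ (m - r)) → Finset (Finset (Fin m)),
        (∀ t, (F t).Nonempty) ∧
        (∀ t, ∀ A ∈ F t, r ≤ A.card ∧ ¬ ∀ T ∈ A.powerset, T.card = r → T ∈ Γ) ∧
        (∀ t₁ t₂, t₁ ≠ t₂ → Disjoint (F t₁) (F t₂)) ∧
        (∀ a : Finset (Fin m) → ZMod 2, (∀ T ∈ Γ, a T = 0) →
          ∀ t, ∑ A ∈ F t, (∑ T ∈ A.powerset.filter (fun T => T.card = r), a T) = a R)) :=
  stmt_4_general m r Γ
end

section
/- Let r ≥ 1, t ≥ 0 and 1 ≤ ρ ≤ r be integers with r + t + 1 ≤ m. Let S = {1, 2, …, r+t+1} ⊆ [m] and for i ∈ {0, 1, …, ρ−1} let S_i = S \ {r+t+1−i}, so each S_i has r + t elements. Then: (i) the number of distinct r-element subsets of [m] contained in at least one of S₀,…,S_{ρ−1} equals ∑_{i=0}^{ρ−1} C(r+t−i, r−i); and (ii) the number of distinct subsets of [m] of cardinality at least r contained in at least one of S₀,…,S_{ρ−1} equals ∑_{j=0}^{t} ∑_{i=0}^{ρ−1} C(r+t−i, r+j−i). -/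
/-!
Classify a set `A` lying in one of the `S_i = [N] \ {N - i}` (`i < ρ`, `N = r + t + 1`) by the
least `i` with `N - i ∉ A`. Then `A` contains the top block `N - i + 1, …, N`, omits `N - i`, and
is otherwise an arbitrary `(k - i)`-subset of the remaining `N - 1 - i` elements, so the classes
are disjoint and of size `C(N - 1 - i, k - i)`. Summing over the sizes `k = r + j`, `j ≤ t`, gives
the second count, since a subset of some `S_i` has at most `r + t` elements.
-/

open Finset

lemma exists_Ioc_subset_of_sub_notMem {A : Finset ℕ} {N i₀ : ℕ} (h : N - i₀ ∉ A) :
    ∃ i ≤ i₀, N - i ∉ A ∧ Ioc (N - i) N ⊆ A := by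
  have hex : ∃ i, N - i ∉ A := ⟨i₀, h⟩
  refine ⟨Nat.find hex, Nat.find_min' hex h, Nat.find_spec hex, fun a ha => ?_⟩
  rw [mem_Ioc] at ha
  have := Nat.find_min hex (show N - a < Nat.find hex by omega)
  rwa [not_not, Nat.sub_sub_self ha.2] at this

def topGapClass (N k i : ℕ) : Finset (Finset ℕ) :=
  ((Icc 1 N).erase (N - i)).powersetCard k |>.filter (Ioc (N - i) N ⊆ ·)

lemma card_topGapClass {n k i : ℕ} (hik : i ≤ k) (hin : i ≤ n) :
    #(topGapClass (n + 1) k i) = (n - i).choose (k - i) := by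
  have hmem : n + 1 - i ∈ Icc 1 (n + 1) := by rw [mem_Icc]; omega
  have hblock : Ioc (n + 1 - i) (n + 1) ⊆ (Icc 1 (n + 1)).erase (n + 1 - i) := fun a ha => by
    rw [mem_Ioc] at ha
    rw [mem_erase, mem_Icc]
    omega
  rw [topGapClass, card_filter_powersetCard_subset _ _ _ hblock (by simp; omega),
    card_erase_of_mem hmem]
  simp only [Nat.card_Icc, Nat.card_Ioc]
  congr 1 <;> omega

lemma disjoint_topGapClass {N k i j : ℕ} (hij : i < j) (hiN : i < N) :
    Disjoint (topGapClass N k i) (topGapClass N k j) := by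
  rw [disjoint_left]
  intro A hAi hAj
  simp only [topGapClass, mem_filter, mem_powersetCard] at hAi hAj
  have hgap : N - i ∉ A := fun h => (mem_erase.mp (hAi.1.1 h)).1 rfl
  exact hgap (hAj.2 (mem_Ioc.mpr (by omega)))

lemma filter_exists_subset_erase_eq_biUnion {m N k ρ : ℕ} (hNm : N ≤ m) :
    (Icc 1 m).powerset.filter (fun A => A.card = k ∧
        ∃ i ∈ range ρ, A ⊆ (Icc 1 N).erase (N - i))
      = (range ρ).biUnion (topGapClass N k) := by
  ext A
  simp only [topGapClass, mem_filter, mem_powerset, mem_biUnion, mem_range, mem_powersetCard]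
  constructor
  · rintro ⟨-, hcard, i₀, hi₀, hsub₀⟩
    obtain ⟨i, hii₀, hgap, hblock⟩ :=
      exists_Ioc_subset_of_sub_notMem fun h => (mem_erase.mp (hsub₀ h)).1 rfl
    refine ⟨i, by omega, ⟨fun a ha => mem_erase.mpr ⟨?_, ?_⟩, hcard⟩, hblock⟩
    · rintro rfl
      exact hgap ha
    · exact erase_subset _ _ (hsub₀ ha)
  · rintro ⟨i, hi, ⟨hsub, hcard⟩, -⟩
    exact ⟨hsub.trans ((erase_subset _ _).trans (Icc_subset_Icc_right hNm)), hcard, i, hi, hsub⟩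

lemma card_filter_exists_subset_erase {m n k ρ : ℕ} (hρk : ρ ≤ k) (hρn : ρ ≤ n + 1)
    (hnm : n + 1 ≤ m) :
    #((Icc 1 m).powerset.filter (fun A => A.card = k ∧
        ∃ i ∈ range ρ, A ⊆ (Icc 1 (n + 1)).erase (n + 1 - i)))
      = ∑ i ∈ range ρ, (n - i).choose (k - i) := by
  rw [filter_exists_subset_erase_eq_biUnion hnm, card_biUnion]
  · exact sum_congr rfl fun i hi => card_topGapClass (by simp at hi; omega) (by simp at hi; omega)
  · intro i hi j hj hij
    simp only [coe_range, Set.mem_Iio] at hi hj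
    rcases hij.lt_or_gt with h | h
    · exact disjoint_topGapClass h (by omega)
    · exact (disjoint_topGapClass h (by omega)).symm

lemma card_filter_le_card_eq_sum {α : Type*} (s : Finset (Finset α)) (p : Finset α → Prop)
    [DecidablePred p] (r t : ℕ) (hle : ∀ A ∈ s, p A → A.card ≤ r + t) :
    #(s.filter (fun A => r ≤ A.card ∧ p A))
      = ∑ j ∈ range (t + 1), #(s.filter (fun A => A.card = r + j ∧ p A)) := by
  rw [card_eq_sum_card_fiberwise (f := fun A => A.card - r) (t := range (t + 1))]
  · refine sum_congr rfl fun j _ => ?_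
    rw [filter_filter]
    exact congrArg card <| filter_congr fun A _ =>
      ⟨fun ⟨⟨_, hp⟩, _⟩ => ⟨by omega, hp⟩, fun ⟨_, hp⟩ => ⟨⟨by omega, hp⟩, by omega⟩⟩
  · intro A hA
    simp only [coe_filter, Set.mem_ofPred_eq, coe_range, Set.mem_Iio] at hA ⊢
    have := hle A hA.1 hA.2.2
    omega

theorem stmt_6_general (m r t ρ : ℕ) (hρr : ρ ≤ r)
    (hm : r + t + 1 ≤ m) :
    (((Finset.Icc 1 m).powerset.filter (fun A => A.card = r ∧
        ∃ i ∈ Finset.range ρ, A ⊆ (Finset.Icc 1 (r + t + 1)).erase (r + t + 1 - i))).card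
      = ∑ i ∈ Finset.range ρ, (r + t - i).choose (r - i)) ∧
    (((Finset.Icc 1 m).powerset.filter (fun A => r ≤ A.card ∧
        ∃ i ∈ Finset.range ρ, A ⊆ (Finset.Icc 1 (r + t + 1)).erase (r + t + 1 - i))).card
      = ∑ j ∈ Finset.range (t + 1), ∑ i ∈ Finset.range ρ,
          (r + t - i).choose (r + j - i)) := by
  refine ⟨card_filter_exists_subset_erase hρr (by omega) hm, ?_⟩
  have hsize : ∀ A ∈ (Icc 1 m).powerset,
      (∃ i ∈ range ρ, A ⊆ (Icc 1 (r + t + 1)).erase (r + t + 1 - i)) → A.card ≤ r + t := by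
    rintro A - ⟨i, hi, hsub⟩
    have hmem : r + t + 1 - i ∈ Icc 1 (r + t + 1) := by simp at hi ⊢; omega
    simpa [card_erase_of_mem hmem] using card_le_card hsub
  rw [card_filter_le_card_eq_sum _ _ r t hsize]
  exact sum_congr rfl fun j _ => card_filter_exists_subset_erase (by omega) (by omega) hm

/-- With `S = {1,…,r+t+1} ⊆ [m]` and `S_i = S \ {r+t+1−i}` for
`i ∈ {0,…,ρ−1}` (each of cardinality `r+t`): (i) the number of distinct r-element subsets
of `[m]` contained in some `S_i` equals `∑_{i=0}^{ρ−1} C(r+t−i, r−i)`; (ii) the number of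
distinct subsets of `[m]` of cardinality ≥ r contained in some `S_i` equals
`∑_{j=0}^{t} ∑_{i=0}^{ρ−1} C(r+t−i, r+j−i)`. -/
theorem stmt_6 (m r t ρ : ℕ) (hr : 1 ≤ r) (hρ1 : 1 ≤ ρ) (hρr : ρ ≤ r)
    (hm : r + t + 1 ≤ m) :
    (((Finset.Icc 1 m).powerset.filter (fun A => A.card = r ∧
        ∃ i ∈ Finset.range ρ, A ⊆ (Finset.Icc 1 (r + t + 1)).erase (r + t + 1 - i))).card
      = ∑ i ∈ Finset.range ρ, (r + t - i).choose (r - i)) ∧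
    (((Finset.Icc 1 m).powerset.filter (fun A => r ≤ A.card ∧
        ∃ i ∈ Finset.range ρ, A ⊆ (Finset.Icc 1 (r + t + 1)).erase (r + t + 1 - i))).card
      = ∑ j ∈ Finset.range (t + 1), ∑ i ∈ Finset.range ρ,
          (r + t - i).choose (r + j - i)) :=
  stmt_6_general m r t ρ hρr hm
end

section
/- Let r ≥ 1 and ℓ ≥ 1 be integers. Define h(p, r, t) = ∑_{i=0}^{p−1} C(r+t−i, r−i) for p > 0 and h(0, r, t) = 0. Then every integer γ with 0 ≤ γ < C(r+ℓ, r) has a unique representation by a vector (ρ_{ℓ−1}, …, ρ₁, ρ₀) of nonnegative integers with ∑_{i=0}^{ℓ−1} ρ_i ≤ r such that γ = ∑_{t=0}^{ℓ−1} h(ρ_t, r_t, t), where r_t = r − ∑_{q=t+1}^{ℓ−1} ρ_q. -/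
/-!
For fixed `r` and `t`, `p ↦ h(p, r, t)` is strictly increasing with increments
`C(r - p + t, r - p)`, and by the hockey-stick identity `h(r + 1, r, t) = C(r + t + 1, r)`.
So the values `h(0, r, ℓ - 1) < ⋯ < h(r + 1, r, ℓ - 1)` cut `[0, C(r + ℓ, r))` into consecutive
intervals, the `p`-th of length `C(r - p + ℓ - 1, r - p)`. The top digit `ρ_{ℓ-1}` is the index
of the interval containing `γ`, and the offset of `γ` in it is represented, by induction on `ℓ`,
with `r - ρ_{ℓ-1}` and `ℓ - 1` in place of `r` and `ℓ`.
-/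

/-- `h(p, r, t) = ∑_{i=0}^{p−1} C(r+t−i, r−i)` (equal to `0` when `p = 0`). -/
def hfun (p r t : ℕ) : ℕ := ∑ i ∈ Finset.range p, (r + t - i).choose (r - i)

open Finset

theorem Fin.sum_Ioi_castSucc {M : Type*} [AddCommMonoid M] {n : ℕ} (f : Fin (n + 1) → M)
    (t : Fin n) : ∑ q ∈ Ioi t.castSucc, f q = ∑ q ∈ Ioi t, f q.castSucc + f (last n) := by
  have hmem : last n ∉ (Ioi t).map castSuccEmb := by simp [map_castSuccEmb_Ioi]
  have hIoi : Ioi t.castSucc = insert (last n) ((Ioi t).map castSuccEmb) := by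
    rw [map_castSuccEmb_Ioi, Ioo_insert_right (castSucc_lt_last t)]
    rfl
  rw [hIoi, sum_insert hmem, sum_map, add_comm]
  rfl

lemma hfun_add_one (p r t : ℕ) : hfun (p + 1) r t = hfun p r t + (r + t - p).choose (r - p) :=
  sum_range_succ _ p

lemma hfun_strictMono (r t : ℕ) : StrictMono (hfun · r t) :=
  strictMono_nat_of_lt_succ fun p => by
    rw [hfun_add_one]
    exact Nat.lt_add_of_pos_right (Nat.choose_pos (by omega))

lemma hfun_self_add_one (r t : ℕ) : hfun (r + 1) r t = (r + t + 1).choose r := by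
  have hterm : ∀ j ∈ range (r + 1),
      (r + t - (r + 1 - 1 - j)).choose (r - (r + 1 - 1 - j)) = (j + t).choose t := by
    intro j hj
    rw [mem_range] at hj
    rw [show r + t - (r + 1 - 1 - j) = j + t by omega, show r - (r + 1 - 1 - j) = j by omega,
      Nat.choose_symm_add]
  rw [hfun, ← sum_range_reflect, sum_congr rfl hterm, Nat.sum_range_add_choose,
    Nat.choose_symm_of_eq_add (by omega : r + t + 1 = (t + 1) + r)]

lemma hfun_inj_of_mem_Ico {r t p q γ : ℕ} (hp : γ ∈ Set.Ico (hfun p r t) (hfun (p + 1) r t))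
    (hq : γ ∈ Set.Ico (hfun q r t) (hfun (q + 1) r t)) : p = q := by
  by_contra hpq
  exact Set.disjoint_left.1 ((hfun_strictMono r t).monotone.pairwise_disjoint_on_Ico_succ hpq) hp hq

lemma exists_mem_Ico_hfun {r t γ : ℕ} (hγ : γ < (r + t + 1).choose r) :
    ∃ p ≤ r, γ ∈ Set.Ico (hfun p r t) (hfun (p + 1) r t) := by
  rw [← hfun_self_add_one] at hγ
  simpa only [Set.mem_iUnion, mem_range, exists_prop, Nat.lt_add_one_iff] using
    Ico_subset_biUnion_Ico (r + 1) (hfun · r t) ⟨γ.zero_le, hγ⟩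

lemma add_hfun_mem_Ico_iff {r t p v : ℕ} (hp : p ≤ r) :
    v + hfun p r t ∈ Set.Ico (hfun p r t) (hfun (p + 1) r t) ↔
      v < (r - p + t).choose (r - p) := by
  rw [Set.mem_Ico, hfun_add_one, show r + t - p = r - p + t by omega]
  omega

def reprValue {l : ℕ} (r : ℕ) (ρ : Fin l → ℕ) : ℕ :=
  ∑ t : Fin l, hfun (ρ t) (r - ∑ q ∈ Ioi t, ρ q) t

lemma reprValue_snoc {l : ℕ} (r p : ℕ) (ρ : Fin l → ℕ) :
    reprValue r (Fin.snoc ρ p : Fin (l + 1) → ℕ) = reprValue (r - p) ρ + hfun p r l := by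
  have hIoi : Ioi (Fin.last l) = ∅ := Ioi_eq_empty.2 isMax_top
  simp only [reprValue, Fin.sum_univ_castSucc, Fin.sum_Ioi_castSucc, Fin.snoc_castSucc,
    Fin.snoc_last, Fin.val_castSucc, Fin.val_last, hIoi, sum_empty, Nat.sub_zero,
    add_comm _ p, Nat.sub_add_eq]

lemma reprValue_lt {l : ℕ} (r : ℕ) (ρ : Fin l → ℕ) (hρ : ∑ i, ρ i ≤ r) :
    reprValue r ρ < (r + l).choose r := by
  induction l generalizing r with
  | zero => simp [reprValue]
  | succ l ih =>
    cases ρ using Fin.snocCases with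
    | snoc ρ p =>
      rw [Fin.sum_snoc] at hρ
      have hmem := (add_hfun_mem_Ico_iff (t := l) (by omega)).2 (ih (r - p) ρ (by omega))
      rw [reprValue_snoc, ← add_assoc, ← hfun_self_add_one]
      exact hmem.2.trans_le ((hfun_strictMono r l).monotone (by omega))

theorem existsUnique_reprValue (l r γ : ℕ) (hγ : γ < (r + l).choose r) :
    ∃! ρ : Fin l → ℕ, ∑ i, ρ i ≤ r ∧ γ = reprValue r ρ := by
  induction l generalizing r γ with
  | zero =>
    obtain rfl : γ = 0 := by simpa using hγ
    exact ⟨0, by simp [reprValue], fun σ _ => Subsingleton.elim σ 0⟩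
  | succ l ih =>
    obtain ⟨p, hpr, hp⟩ := exists_mem_Ico_hfun (by rwa [← add_assoc] at hγ)
    have hγp : γ - hfun p r l < (r - p + l).choose (r - p) := by
      rw [← add_hfun_mem_Ico_iff hpr, Nat.sub_add_cancel hp.1]
      exact hp
    obtain ⟨ρ, ⟨hρs, hρv⟩, hρu⟩ := ih (r - p) (γ - hfun p r l) hγp
    refine ⟨Fin.snoc ρ p, ⟨?_, ?_⟩, fun σ ⟨hσs, hσv⟩ => ?_⟩
    · rw [Fin.sum_snoc]
      omega
    · rw [reprValue_snoc, ← hρv, Nat.sub_add_cancel hp.1]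
    cases σ using Fin.snocCases with
    | snoc σ q =>
      rw [Fin.sum_snoc] at hσs
      rw [reprValue_snoc] at hσv
      obtain rfl : q = p := by
        refine hfun_inj_of_mem_Ico ?_ hp
        rw [hσv, add_hfun_mem_Ico_iff (by omega)]
        exact reprValue_lt _ _ (by omega)
      rw [hρu σ ⟨by omega, by omega⟩]

theorem stmt_7_general (r l : ℕ)
    (γ : ℕ) (hγ : γ < (r + l).choose r) :
    ∃! ρ : Fin l → ℕ, (∑ i, ρ i ≤ r) ∧
      γ = ∑ t : Fin l, hfun (ρ t) (r - ∑ q ∈ Finset.Ioi t, ρ q) (t : ℕ) :=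
  existsUnique_reprValue l r γ hγ

/-- Every integer `0 ≤ γ < C(r+ℓ, r)` has a unique representation by a
vector `(ρ_{ℓ−1}, …, ρ₀)` of nonnegative integers with `∑ ρ_i ≤ r` such that
`γ = ∑_{t=0}^{ℓ−1} h(ρ_t, r_t, t)`, where `r_t = r − ∑_{q=t+1}^{ℓ−1} ρ_q`. -/
theorem stmt_7 (r l : ℕ) (hr : 1 ≤ r) (hl : 1 ≤ l)
    (γ : ℕ) (hγ : γ < (r + l).choose r) :
    ∃! ρ : Fin l → ℕ, (∑ i, ρ i ≤ r) ∧
      γ = ∑ t : Fin l, hfun (ρ t) (r - ∑ q ∈ Finset.Ioi t, ρ q) (t : ℕ) :=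
  stmt_7_general r l γ hγ
end

section
/- Let m ≥ 1, 1 ≤ r ≤ m and ℓ = m − r ≥ 1. Let γ be an integer with 0 ≤ γ < C(m, r), and let (ρ_{ℓ−1}, …, ρ₀) be its representation, i.e., nonnegative integers with ∑ ρ_i ≤ r and γ = ∑_{t=0}^{ℓ−1} h(ρ_t, r_t, t) where r_t = r − ∑_{q>t} ρ_q, h(p,r,t) = ∑_{i=0}^{p−1} C(r+t−i, r−i) for p > 0 and h(0,r,t) = 0. Set γ' = ∑_{t=0}^{ℓ−1} h₁(r_t, t), where h₁(r, t) = ∑_{j=0}^{t} ∑_{i=0}^{ρ_t−1} C(r+t−i, r+j−i) if ρ_t > 0 and h₁(r, t) = 0 if ρ_t = 0. Then there exists a set Γ of exactly γ r-element subsets of [m] such that the number of subsets S of [m] with |S| ≥ r, every r-element subset of which belongs to Γ, is at least γ'. -/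
/-- `h₁` depending on `ρ_t`: `h₁(ρ, r, t) = ∑_{j=0}^{t} ∑_{i=0}^{ρ−1} C(r+t−i, r+j−i)`
(equal to `0` when `ρ = 0`). -/
def h1fun (ρ r t : ℕ) : ℕ :=
  ∑ j ∈ Finset.range (t + 1), ∑ i ∈ Finset.range ρ, (r + t - i).choose (r + j - i)

open Finset

lemma Fin.card_filter_le_val_lt {n a b : ℕ} (hb : b ≤ n) :
    #{x : Fin n | a ≤ ↑x ∧ ↑x < b} = b - a := by
  rw [← Nat.card_Ico, ← card_map Fin.valEmbedding]
  congr 1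
  ext y
  simp only [mem_map, mem_filter, mem_univ, true_and, Fin.valEmbedding_apply, mem_Ico]
  exact ⟨by rintro ⟨x, hx, rfl⟩; exact hx, fun hy => ⟨⟨y, by omega⟩, hy, rfl⟩⟩

lemma choose_sub_add_sum_range_choose (n k p : ℕ) (hpk : p ≤ k) (hpn : p ≤ n) :
    (n + 1 - p).choose (k - p) + ∑ i ∈ range p, (n - i).choose (k - i) = (n + 1).choose k := by
  induction p with
  | zero => simp
  | succ p ih =>
    have pascal : (n + 1 - p).choose (k - p) =
        (n + 1 - (p + 1)).choose (k - (p + 1)) + (n - p).choose (k - p) := by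
      rw [show n + 1 - p = n - p + 1 by omega, show n + 1 - (p + 1) = n - p by omega,
        show k - p = k - (p + 1) + 1 by omega, Nat.choose_succ_succ']
    rw [sum_range_succ, ← ih (by omega) (by omega), pascal]
    ring

theorem card_filter_card_eq_inter_eq_not_subset {α : Type*} [Fintype α] [DecidableEq α]
    {L P B : Finset α} (hP : P ⊆ L) (hB : B ⊆ Lᶜ) {k : ℕ} (hk : #P + #B ≤ k) :
    #{S : Finset α | #S = k ∧ S ∩ L = P ∧ ¬ B ⊆ S} =
      (#Lᶜ).choose (k - #P) - (#Lᶜ - #B).choose (k - #P - #B) := by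
  have hdisj : ∀ {X}, X ⊆ Lᶜ → Disjoint P X := fun hX =>
    disjoint_of_subset_left hP (disjoint_of_subset_right hX disjoint_compl_right)
  have himage : ({S : Finset α | #S = k ∧ S ∩ L = P ∧ ¬ B ⊆ S} : Finset (Finset α)) =
      ((Lᶜ.powersetCard (k - #P)).filter (¬ B ⊆ ·)).image (P ∪ ·) := by
    ext S
    simp only [mem_filter, mem_univ, true_and, mem_image, mem_powersetCard]
    constructor
    · rintro ⟨hS, hSL, hBS⟩
      refine ⟨S \ L, ⟨⟨fun x hx => mem_compl.2 (mem_sdiff.1 hx).2, ?_⟩,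
        fun h => hBS (h.trans sdiff_subset)⟩, by rw [← hSL, union_comm, sdiff_union_inter]⟩
      have := card_sdiff_add_card_inter S L
      rw [hSL] at this
      omega
    · rintro ⟨X, ⟨⟨hXL, hX⟩, hBX⟩, rfl⟩
      refine ⟨by rw [card_union_of_disjoint (hdisj hXL)]; omega, ?_, fun h => hBX fun x hx => ?_⟩
      · rw [union_inter_distrib_right, inter_eq_left.2 hP,
          disjoint_iff_inter_eq_empty.1 (disjoint_of_subset_left hXL disjoint_compl_left),
          union_empty]
      · exact (mem_union.1 (h hx)).resolve_left fun hxP => mem_compl.1 (hB hx) (hP hxP)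
  have hinj : Set.InjOn (P ∪ ·) ↑((Lᶜ.powersetCard (k - #P)).filter (¬ B ⊆ ·)) := by
    intro X hX Y hY hXY
    simp only [coe_filter, mem_powersetCard, Set.mem_ofPred_eq] at hX hY
    rw [← union_sdiff_cancel_left (hdisj hX.1.1), ← union_sdiff_cancel_left (hdisj hY.1.1)]
    exact congrArg (· \ P) hXY
  rw [himage, card_image_of_injOn hinj, filter_not, card_sdiff_of_subset (filter_subset _ _),
    card_filter_powersetCard_subset _ _ _ hB (by omega), card_powersetCard]

lemma hfun_eq_choose_sub_choose (p k t : ℕ) (hpk : p ≤ k) :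
    hfun p k t = (k + t + 1).choose k - (k + t + 1 - p).choose (k - p) := by
  have := choose_sub_add_sum_range_choose (k + t) k p hpk (by omega)
  unfold hfun
  omega

lemma h1fun_eq_sum_choose_sub_choose (p k t : ℕ) (hpk : p ≤ k) :
    h1fun p k t = ∑ j ∈ range (t + 1),
      ((k + t + 1).choose (k + j) - (k + t + 1 - p).choose (k + j - p)) := by
  refine sum_congr rfl fun j _ => ?_
  have := choose_sub_add_sum_range_choose (k + t) (k + j) p (by omega) (by omega)
  omega

namespace BlockLayout

variable {l : ℕ} (ρ : Fin l → ℕ)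

-- `tailSum ρ t = r - r_t` in the paper's notation.
def tailSum (t : Fin l) : ℕ := ∑ q ∈ Ioi t, ρ q

-- Block `t` starts after the blocks `q > t`, each of which is followed by one unused position.
def start (t : Fin l) : ℕ := tailSum ρ t + (l - 1 - t)

lemma tailSum_add_self (t : Fin l) : tailSum ρ t + ρ t = ∑ q ∈ Ici t, ρ q := by
  rw [← Ioi_insert, sum_insert (by simp), add_comm, tailSum]

lemma tailSum_add_le_sum (t : Fin l) : tailSum ρ t + ρ t ≤ ∑ q, ρ q := by
  rw [tailSum_add_self]
  exact sum_le_sum_of_subset (subset_univ _)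

lemma tailSum_add_le_of_lt {t q : Fin l} (h : t < q) : tailSum ρ q + ρ q ≤ tailSum ρ t := by
  rw [tailSum_add_self]
  exact sum_le_sum_of_subset fun x hx => mem_Ioi.2 (h.trans_le (mem_Ici.1 hx))

lemma start_add_lt_of_lt {t q : Fin l} (h : t < q) : start ρ q + ρ q < start ρ t := by
  have := tailSum_add_le_of_lt ρ h
  have : (q : ℕ) < l := q.isLt
  have : (t : ℕ) < q := h
  unfold start
  omega

lemma start_le_of_le {t q : Fin l} (h : t ≤ q) : start ρ q ≤ start ρ t := by
  rcases h.eq_or_lt with rfl | h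
  · rfl
  · exact (Nat.le_add_right _ _).trans (start_add_lt_of_lt ρ h).le

variable (n : ℕ)

def block (t : Fin l) : Finset (Fin n) := {x | start ρ t ≤ ↑x ∧ ↑x < start ρ t + ρ t}

def below (t : Fin l) : Finset (Fin n) := {x | ↑x < start ρ t}

def blocksAbove (t : Fin l) : Finset (Fin n) := (Ioi t).biUnion (block ρ n)

def layer (t : Fin l) (k : ℕ) : Finset (Finset (Fin n)) :=
  {S | #S = k ∧ S ∩ below ρ n t = blocksAbove ρ n t ∧ ¬ block ρ n t ⊆ S}

variable {ρ n}

lemma mem_block {t : Fin l} {x : Fin n} :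
    x ∈ block ρ n t ↔ start ρ t ≤ ↑x ∧ ↑x < start ρ t + ρ t := by
  simp [block]

lemma mem_below {t : Fin l} {x : Fin n} : x ∈ below ρ n t ↔ ↑x < start ρ t := by
  simp [below]

lemma mem_blocksAbove {t : Fin l} {x : Fin n} :
    x ∈ blocksAbove ρ n t ↔ ∃ q, t < q ∧ x ∈ block ρ n q := by
  simp [blocksAbove]

lemma mem_layer {t : Fin l} {k : ℕ} {S : Finset (Fin n)} :
    S ∈ layer ρ n t k ↔ #S = k ∧ S ∩ below ρ n t = blocksAbove ρ n t ∧ ¬ block ρ n t ⊆ S := by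
  simp [layer]

lemma block_subset_below_of_lt {t q : Fin l} (h : t < q) : block ρ n q ⊆ below ρ n t := by
  intro x hx
  rw [mem_block] at hx
  have := start_add_lt_of_lt ρ h
  rw [mem_below]
  omega

lemma blocksAbove_subset_below (t : Fin l) : blocksAbove ρ n t ⊆ below ρ n t :=
  biUnion_subset.2 fun _ hq => block_subset_below_of_lt (mem_Ioi.1 hq)

lemma block_subset_compl_below (t : Fin l) : block ρ n t ⊆ (below ρ n t)ᶜ := by
  intro x hx
  rw [mem_block] at hx
  rw [mem_compl, mem_below]
  omega

lemma disjoint_block_of_lt {t q : Fin l} (h : t < q) : Disjoint (block ρ n t) (block ρ n q) :=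
  disjoint_of_subset_right (block_subset_below_of_lt h) (disjoint_of_subset_left
    (block_subset_compl_below t) disjoint_compl_left)

lemma disjoint_layer_of_lt {t q : Fin l} (h : t < q) (k k' : ℕ) :
    Disjoint (layer ρ n t k) (layer ρ n q k') := by
  rw [disjoint_left]
  intro S hS hS'
  rw [mem_layer] at hS hS'
  refine hS'.2.2 fun x hx => ?_
  have : x ∈ S ∩ below ρ n t := by
    rw [hS.2.1, mem_blocksAbove]
    exact ⟨q, h, hx⟩
  exact (mem_inter.1 this).1

lemma disjoint_block {t q : Fin l} (h : t ≠ q) : Disjoint (block ρ n t) (block ρ n q) := by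
  rcases h.lt_or_gt with h | h
  · exact disjoint_block_of_lt h
  · exact (disjoint_block_of_lt h).symm

lemma disjoint_layer {t q : Fin l} (h : t ≠ q) (k k' : ℕ) :
    Disjoint (layer ρ n t k) (layer ρ n q k') := by
  rcases h.lt_or_gt with h | h
  · exact disjoint_layer_of_lt h k k'
  · exact (disjoint_layer_of_lt h k' k).symm

lemma disjoint_layer_of_ne (t q : Fin l) {k k' : ℕ} (h : k ≠ k') :
    Disjoint (layer ρ n t k) (layer ρ n q k') :=
  disjoint_left.2 fun _ hS hS' => h ((mem_layer.1 hS).1.symm.trans (mem_layer.1 hS').1)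

variable {r : ℕ}

lemma card_block (hρ : ∑ q, ρ q ≤ r) (t : Fin l) : #(block ρ (r + l) t) = ρ t := by
  have := tailSum_add_le_sum ρ t
  have : (t : ℕ) < l := t.isLt
  rw [block, Fin.card_filter_le_val_lt (by unfold start; omega)]
  omega

lemma card_blocksAbove (hρ : ∑ q, ρ q ≤ r) (t : Fin l) :
    #(blocksAbove ρ (r + l) t) = tailSum ρ t := by
  rw [blocksAbove, card_biUnion fun q _ q' _ h => disjoint_block h]
  exact sum_congr rfl fun q _ => card_block hρ q

lemma card_compl_below (hρ : ∑ q, ρ q ≤ r) (t : Fin l) :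
    #(below ρ (r + l) t)ᶜ = r - tailSum ρ t + t + 1 := by
  have := tailSum_add_le_sum ρ t
  have : (t : ℕ) < l := t.isLt
  rw [card_compl, below, Fin.card_filter_val_lt, Fintype.card_fin]
  unfold start
  omega

lemma card_layer (hρ : ∑ q, ρ q ≤ r) (t : Fin l) {k : ℕ} (hk : tailSum ρ t + ρ t ≤ k) :
    #(layer ρ (r + l) t k) = (r - tailSum ρ t + t + 1).choose (k - tailSum ρ t) -
      (r - tailSum ρ t + t + 1 - ρ t).choose (k - tailSum ρ t - ρ t) := by
  rw [layer, card_filter_card_eq_inter_eq_not_subset (blocksAbove_subset_below t)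
    (block_subset_compl_below t), card_compl_below hρ, card_blocksAbove hρ, card_block hρ]
  rwa [card_blocksAbove hρ, card_block hρ]

lemma exists_mem_layer_of_subset {t : Fin l} {k : ℕ} {S T : Finset (Fin n)}
    (hS : S ∈ layer ρ n t k) (hTS : T ⊆ S) : ∃ q, T ∈ layer ρ n q #T := by
  rw [mem_layer] at hS
  obtain ⟨-, hSbelow, hSblock⟩ := hS
  -- the last block that `T` does not contain
  obtain ⟨q, hq, hqmax⟩ := exists_max_image {q | ¬ block ρ n q ⊆ T} id
    ⟨t, mem_filter.2 ⟨mem_univ t, fun h => hSblock (h.trans hTS)⟩⟩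
  simp only [mem_filter, mem_univ, true_and, id] at hq hqmax
  have htq : t ≤ q := hqmax t fun h => hSblock (h.trans hTS)
  refine ⟨q, mem_layer.2 ⟨rfl, subset_antisymm (fun x hx => ?_) (fun x hx => ?_), hq⟩⟩
  · obtain ⟨hxT, hxq⟩ := mem_inter.1 hx
    have hxS : x ∈ S ∩ below ρ n t :=
      mem_inter.2 ⟨hTS hxT, mem_below.2 ((mem_below.1 hxq).trans_le (start_le_of_le ρ htq))⟩
    rw [hSbelow, mem_blocksAbove] at hxS
    obtain ⟨q', -, hxq'⟩ := hxS
    refine mem_blocksAbove.2 ⟨q', lt_of_not_ge fun hq'q => ?_, hxq'⟩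
    have := start_le_of_le ρ hq'q
    rw [mem_block] at hxq'
    rw [mem_below] at hxq
    omega
  · obtain ⟨q', hqq', hxq'⟩ := mem_blocksAbove.1 hx
    have hq'T : block ρ n q' ⊆ T := by_contra fun h => (hqmax q' h).not_gt hqq'
    exact mem_inter.2 ⟨hq'T hxq', blocksAbove_subset_below q hx⟩

lemma card_layer_eq_hfun (hρ : ∑ q, ρ q ≤ r) (t : Fin l) :
    #(layer ρ (r + l) t r) = hfun (ρ t) (r - tailSum ρ t) t := by
  have := tailSum_add_le_sum ρ t
  rw [card_layer hρ t (by omega), hfun_eq_choose_sub_choose _ _ _ (by omega)]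

lemma sum_card_layer_eq_h1fun (hρ : ∑ q, ρ q ≤ r) (t : Fin l) :
    ∑ j ∈ range (t + 1), #(layer ρ (r + l) t (r + j)) = h1fun (ρ t) (r - tailSum ρ t) t := by
  have := tailSum_add_le_sum ρ t
  rw [h1fun_eq_sum_choose_sub_choose _ _ _ (by omega)]
  refine sum_congr rfl fun j _ => ?_
  rw [card_layer hρ t (by omega), show r + j - tailSum ρ t = r - tailSum ρ t + j by omega]

end BlockLayout

open BlockLayout in
theorem stmt_8_general (m r l : ℕ) (hrm : r ≤ m)
    (hl : l = m - r)
    (γ : ℕ)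
    (ρ : Fin l → ℕ) (hρ : ∑ i, ρ i ≤ r)
    (hrep : γ = ∑ t : Fin l, hfun (ρ t) (r - ∑ q ∈ Finset.Ioi t, ρ q) (t : ℕ)) :
    ∃ Γ : Finset (Finset (Fin m)),
      (∀ T ∈ Γ, T.card = r) ∧ Γ.card = γ ∧
      (∑ t : Fin l, h1fun (ρ t) (r - ∑ q ∈ Finset.Ioi t, ρ q) (t : ℕ))
        ≤ (Finset.univ.filter (fun S : Finset (Fin m) =>
            r ≤ S.card ∧ ∀ T ∈ S.powerset, T.card = r → T ∈ Γ)).card := by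
  obtain rfl : m = r + l := by omega
  set Γ := univ.biUnion (layer ρ (r + l) · r)
  let D := univ.biUnion fun t : Fin l => (range (t + 1)).biUnion (layer ρ (r + l) t <| r + ·)
  have hD : D ⊆ ({S | r ≤ #S ∧ ∀ T ∈ S.powerset, #T = r → T ∈ Γ} : Finset _) := by
    simp only [D, biUnion_subset, mem_range]
    intro t _ j _ S hS
    refine mem_filter.2 ⟨mem_univ S, (mem_layer.1 hS).1 ▸ Nat.le_add_right r j, fun T hT hTr => ?_⟩
    obtain ⟨q, hq⟩ := exists_mem_layer_of_subset hS (mem_powerset.1 hT)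
    rw [hTr] at hq
    exact mem_biUnion.2 ⟨q, mem_univ q, hq⟩
  refine ⟨Γ, fun T hT => ?_, ?_, ?_⟩
  · obtain ⟨t, -, hT⟩ := mem_biUnion.1 hT
    exact (mem_layer.1 hT).1
  · rw [card_biUnion fun t _ q _ h => disjoint_layer h r r, hrep]
    exact sum_congr rfl fun t _ => card_layer_eq_hfun hρ t
  · refine le_of_eq_of_le ?_ (card_le_card hD)
    rw [card_biUnion fun t _ q _ h => (disjoint_biUnion_left _ _ _).2 fun _ _ =>
      (disjoint_biUnion_right _ _ _).2 fun _ _ => disjoint_layer h _ _]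
    refine sum_congr rfl fun t _ => ?_
    rw [card_biUnion fun j _ j' _ h => disjoint_layer_of_ne t t (by simpa using h),
      sum_card_layer_eq_h1fun hρ t]
    rfl

/-- Given `0 ≤ γ < C(m, r)` with representation `(ρ_{ℓ−1},…,ρ₀)`
(so `∑ ρ_i ≤ r` and `γ = ∑_t h(ρ_t, r_t, t)` where `r_t = r − ∑_{q>t} ρ_q`), setting
`γ' = ∑_t h₁(r_t, t)`, there is a set `Γ` of exactly `γ` r-element subsets of `[m]` such
that at least `γ'` coordinates `S` (subsets of `[m]` with `|S| ≥ r` all of whose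
r-element subsets lie in `Γ`) can be deleted. -/
theorem stmt_8 (m r l : ℕ) (hm : 1 ≤ m) (hr : 1 ≤ r) (hrm : r ≤ m)
    (hl : l = m - r) (hl1 : 1 ≤ l)
    (γ : ℕ) (hγ : γ < m.choose r)
    (ρ : Fin l → ℕ) (hρ : ∑ i, ρ i ≤ r)
    (hrep : γ = ∑ t : Fin l, hfun (ρ t) (r - ∑ q ∈ Finset.Ioi t, ρ q) (t : ℕ)) :
    ∃ Γ : Finset (Finset (Fin m)),
      (∀ T ∈ Γ, T.card = r) ∧ Γ.card = γ ∧
      (∑ t : Fin l, h1fun (ρ t) (r - ∑ q ∈ Finset.Ioi t, ρ q) (t : ℕ))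
        ≤ (Finset.univ.filter (fun S : Finset (Fin m) =>
            r ≤ S.card ∧ ∀ T ∈ S.powerset, T.card = r → T ∈ Γ)).card :=
  stmt_8_general m r l hrm hl γ ρ hρ hrep
end

section
/- Let m ≥ 1 and 1 ≤ r ≤ m. Suppose Γ is a set of r-element subsets of [m] with |Γ| = γ, and let D = {S ⊆ [m] : |S| ≥ r and every r-element subset of S belongs to Γ} with |D| ≥ γ'. Then the space of codewords {(f_a(S))_{S ⊆ [m], |S| ≥ r} : a vanishes on Γ} is a linear subspace of the code PRM(r, m−1) of dimension C(m, r) − γ whose support (the set of coordinates S at which some codeword of the subspace is nonzero) has cardinality at most n − γ', where n = ∑_{i=r}^{m} C(m, i). In particular, the (C(m,r) − γ)-th generalized Hamming weight of the binary PRM(r, m−1) code satisfies d_{k−γ} ≤ n − γ'. -/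
/-!
Let `V` be the space of coefficient vectors vanishing on `Γ` and `W` its image under the
evaluation map `a ↦ f_a`. For `|T| = r` the only `r`-subset of `T` is `T` itself, so
`f_a(T) = a(T)`: the kernel of the evaluation map consists of the vectors vanishing on all
`r`-sets, and it lies in `V`. Hence `dim W = dim V - dim ker = C(m, r) - γ`. A coordinate `S`
all of whose `r`-subsets lie in `Γ` only sees coefficients that vanish, so every codeword of
`W` is zero there, and the support of `W` misses at least `γ'` of the `n` coordinates.
-/

open Finset Module

section VanishingOn

variable (K : Type*) {ι : Type*} [Field K]

def vanishingOn (s : Finset ι) : Submodule K (ι → K) :=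
  LinearMap.ker (LinearMap.funLeft K K ((↑) : s → ι))

variable {K}

theorem mem_vanishingOn {s : Finset ι} {a : ι → K} :
    a ∈ vanishingOn K s ↔ ∀ i ∈ s, a i = 0 := by
  simp [vanishingOn, funext_iff, LinearMap.funLeft]

theorem finrank_vanishingOn [Fintype ι] (s : Finset ι) :
    finrank K (vanishingOn K s) = Fintype.card ι - s.card := by
  have h := LinearMap.finrank_range_add_finrank_ker (LinearMap.funLeft K K ((↑) : s → ι))
  rw [LinearMap.range_eq_top.2 (LinearMap.funLeft_surjective_of_injective _ _ _
    Subtype.val_injective), finrank_top, finrank_fintype_fun_eq_card,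
    finrank_fintype_fun_eq_card, Fintype.card_coe] at h
  rw [vanishingOn]
  omega

end VanishingOn

theorem Submodule.finrank_map_of_ker_le {K V W : Type*} [Field K] [AddCommGroup V] [Module K V]
    [FiniteDimensional K V] [AddCommGroup W] [Module K W] (f : V →ₗ[K] W) {p : Submodule K V}
    (hp : LinearMap.ker f ≤ p) :
    finrank K (p.map f) = finrank K p - finrank K (LinearMap.ker f) := by
  have h := LinearMap.finrank_range_add_finrank_ker (f.domRestrict p)
  rw [LinearMap.range_domRestrict, LinearMap.ker_domRestrict,
    (Submodule.comapSubtypeEquivOfLe hp).finrank_eq] at h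
  omega

namespace ProjectiveReedMuller

variable (K : Type*) {α : Type*} [Field K] (r : ℕ)

def encode : (Finset α → K) →ₗ[K] ({S : Finset α // r ≤ S.card} → K) where
  toFun a S := ∑ T ∈ S.1.powerset.filter (fun T => T.card = r), a T
  map_add' a b := by ext; simp [sum_add_distrib]
  map_smul' c a := by ext; simp [mul_sum]

variable {K r}

theorem encode_apply (a : Finset α → K) (S : {S : Finset α // r ≤ S.card}) :
    encode K r a S = ∑ T ∈ S.1.powerset.filter (fun T => T.card = r), a T := rfl

theorem encode_apply_of_card_eq (a : Finset α → K) {T : Finset α} (hT : T.card = r) :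
    encode K r a ⟨T, hT.ge⟩ = a T := by
  have hsingle : T.powerset.filter (fun T' => T'.card = r) = {T} := by
    rw [← powersetCard_eq_filter, ← hT, powersetCard_self]
  rw [encode_apply, hsingle, sum_singleton]

theorem ker_encode [Fintype α] :
    LinearMap.ker (encode K r) = vanishingOn K (powersetCard r (univ : Finset α)) := by
  ext a
  simp only [LinearMap.mem_ker, mem_vanishingOn, mem_powersetCard_univ]
  constructor
  · intro h T hT
    rw [← encode_apply_of_card_eq a hT, h, Pi.zero_apply]
  · intro h
    ext S
    exact sum_eq_zero fun T hT => h T (mem_filter.1 hT).2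

theorem finrank_map_encode_vanishingOn [Fintype α] {Γ : Finset (Finset α)}
    (hΓ : ∀ T ∈ Γ, T.card = r) :
    finrank K ((vanishingOn K Γ).map (encode K r)) = (Fintype.card α).choose r - Γ.card := by
  have hΓsub : Γ ⊆ powersetCard r univ := fun T hT => mem_powersetCard_univ.2 (hΓ T hT)
  have hker : LinearMap.ker (encode K r) ≤ vanishingOn K Γ := by
    rw [ker_encode]
    intro a ha
    exact mem_vanishingOn.2 fun T hT => mem_vanishingOn.1 ha T (hΓsub hT)
  have hΓcard : Γ.card ≤ (Fintype.card α).choose r := by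
    simpa using card_le_card hΓsub
  have hchoose := (Fintype.card α).choose_le_two_pow r
  rw [Submodule.finrank_map_of_ker_le _ hker, ker_encode, finrank_vanishingOn,
    finrank_vanishingOn, card_powersetCard, card_univ, Fintype.card_finset]
  omega

theorem encode_apply_eq_zero {Γ : Finset (Finset α)} {a : Finset α → K}
    (ha : a ∈ vanishingOn K Γ) {S : {S : Finset α // r ≤ S.card}}
    (hS : ∀ T ∈ S.1.powerset, T.card = r → T ∈ Γ) : encode K r a S = 0 :=
  sum_eq_zero fun T hT => mem_vanishingOn.1 ha T (hS T (mem_filter.1 hT).1 (mem_filter.1 hT).2)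

theorem card_finset_card_ge [Fintype α] :
    Fintype.card {S : Finset α // r ≤ S.card} =
      ∑ i ∈ Icc r (Fintype.card α), (Fintype.card α).choose i := by
  rw [Fintype.card_subtype, card_eq_sum_card_fiberwise (f := card) (t := Icc r (Fintype.card α))
    fun S hS => mem_Icc.2 ⟨(mem_filter.1 hS).2, card_le_univ S⟩]
  refine sum_congr rfl fun i hi => ?_
  rw [← card_univ, ← card_powersetCard, powersetCard_eq_filter, filter_filter]
  congr 1
  exact filter_congr fun S _ => ⟨fun h => h.2, fun h => ⟨h ▸ (mem_Icc.1 hi).1, h⟩⟩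

theorem ncard_subtype_setOf_eq_card_filter [Fintype α] [DecidableEq α] (Γ : Finset (Finset α)) :
    {S : {S : Finset α // r ≤ S.card} | ∀ T ∈ S.1.powerset, T.card = r → T ∈ Γ}.ncard =
      (univ.filter fun S : Finset α =>
        r ≤ S.card ∧ ∀ T ∈ S.powerset, T.card = r → T ∈ Γ).card := by
  rw [← Set.ncard_coe_finset]
  refine (Set.ncard_subtype (fun S : Finset α => r ≤ S.card)
    {S | ∀ T ∈ S.powerset, T.card = r → T ∈ Γ}).trans (congrArg _ (Set.ext fun S => ?_))
  simp [and_comm]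

theorem ncard_support_map_encode_le [Fintype α] [DecidableEq α] (Γ : Finset (Finset α)) :
    {S : {S : Finset α // r ≤ S.card} | ∃ c ∈ (vanishingOn K Γ).map (encode K r), c S ≠ 0}.ncard
      ≤ (∑ i ∈ Icc r (Fintype.card α), (Fintype.card α).choose i) -
        (univ.filter fun S : Finset α =>
          r ≤ S.card ∧ ∀ T ∈ S.powerset, T.card = r → T ∈ Γ).card := by
  have hsupp : {S : {S : Finset α // r ≤ S.card} | ∃ c ∈ (vanishingOn K Γ).map (encode K r),
      c S ≠ 0} ⊆ {S | ∀ T ∈ S.1.powerset, T.card = r → T ∈ Γ}ᶜ := by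
    rintro S ⟨_, ⟨a, ha, rfl⟩, hS⟩ hSΓ
    exact hS (encode_apply_eq_zero ha hSΓ)
  calc _ ≤ _ := Set.ncard_le_ncard hsupp
    _ = _ := by
      rw [Set.ncard_compl, ncard_subtype_setOf_eq_card_filter, Nat.card_eq_fintype_card,
        card_finset_card_ge]

end ProjectiveReedMuller

open ProjectiveReedMuller

theorem stmt_9_general (m r γ γ' : ℕ)
    (Γ : Finset (Finset (Fin m))) (hΓr : ∀ T ∈ Γ, T.card = r) (hΓc : Γ.card = γ)
    (hD : γ' ≤ (Finset.univ.filter (fun S : Finset (Fin m) =>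
        r ≤ S.card ∧ ∀ T ∈ S.powerset, T.card = r → T ∈ Γ)).card) :
    ∃ W : Submodule (ZMod 2) ({S : Finset (Fin m) // r ≤ S.card} → ZMod 2),
      (∀ c, c ∈ W ↔ ∃ a : Finset (Fin m) → ZMod 2, (∀ T ∈ Γ, a T = 0) ∧
          c = fun S => ∑ T ∈ S.1.powerset.filter (fun T => T.card = r), a T) ∧
      Module.finrank (ZMod 2) W = m.choose r - γ ∧
      Set.ncard {S : {S : Finset (Fin m) // r ≤ S.card} | ∃ c ∈ W, c S ≠ 0}
        ≤ (∑ i ∈ Finset.Icc r m, m.choose i) - γ' := by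
  refine ⟨(vanishingOn (ZMod 2) Γ).map (encode (ZMod 2) r), fun c => ?_, ?_, ?_⟩
  · simp only [Submodule.mem_map, mem_vanishingOn, eq_comm (a := c)]
    rfl
  · rw [finrank_map_encode_vanishingOn hΓr, Fintype.card_fin, hΓc]
  · have := ncard_support_map_encode_le (K := ZMod 2) (r := r) Γ
    rw [Fintype.card_fin] at this
    omega

/-- If `Γ` is a set of `γ` r-element subsets of `[m]` and at least `γ'`
coordinates `S` (with `|S| ≥ r`) have all their r-element subsets in `Γ`, then the set of
codewords `{(f_a(S))_{|S| ≥ r} : a vanishes on Γ}` is a linear subspace of PRM(r, m−1) of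
dimension `C(m,r) − γ` whose support has cardinality at most `n − γ'`, where
`n = ∑_{i=r}^m C(m,i)`.  In particular `d_{k−γ} ≤ n − γ'` for the generalized Hamming
weights of the binary PRM(r, m−1) code. -/
theorem stmt_9 (m r γ γ' : ℕ) (hm : 1 ≤ m) (hr : 1 ≤ r) (hrm : r ≤ m)
    (Γ : Finset (Finset (Fin m))) (hΓr : ∀ T ∈ Γ, T.card = r) (hΓc : Γ.card = γ)
    (hD : γ' ≤ (Finset.univ.filter (fun S : Finset (Fin m) =>
        r ≤ S.card ∧ ∀ T ∈ S.powerset, T.card = r → T ∈ Γ)).card) :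
    ∃ W : Submodule (ZMod 2) ({S : Finset (Fin m) // r ≤ S.card} → ZMod 2),
      (∀ c, c ∈ W ↔ ∃ a : Finset (Fin m) → ZMod 2, (∀ T ∈ Γ, a T = 0) ∧
          c = fun S => ∑ T ∈ S.1.powerset.filter (fun T => T.card = r), a T) ∧
      Module.finrank (ZMod 2) W = m.choose r - γ ∧
      Set.ncard {S : {S : Finset (Fin m) // r ≤ S.card} | ∃ c ∈ W, c S ≠ 0}
        ≤ (∑ i ∈ Finset.Icc r m, m.choose i) - γ' :=
  stmt_9_general m r γ γ' Γ hΓr hΓc hD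
end

section
/- Let m ≥ 1, 1 ≤ r ≤ m and ℓ = m − r. The minimum distance of the binary shortened projective Reed–Muller code PRM(r, m−1) equals 2^ℓ: (i) for every nonzero coefficient vector a, the number of subsets S of [m] with |S| ≥ r and f_a(S) ≠ 0 is at least 2^ℓ; and (ii) there exists a nonzero coefficient vector a (e.g., a supported on a single r-element subset R) for which the number of such S is exactly 2^ℓ. -/
open Finset

lemma rm_key {α : Type*} [DecidableEq α] (U : Finset α) : ∀ (r : ℕ) (a : Finset α → ZMod 2),
    (∀ T, a T ≠ 0 → T ⊆ U ∧ T.card ≤ r) → (∃ T, a T ≠ 0) →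
    2 ^ (U.card - r) ≤ (U.powerset.filter (fun S => ∑ T ∈ S.powerset, a T ≠ 0)).card := by
  induction U using Finset.induction_on with
  | empty =>
    intro r a ha ⟨T, hT⟩
    have hTe : T = ∅ := subset_empty.mp (ha T hT).1
    subst hTe
    have : (Finset.powerset (∅ : Finset α)).filter (fun S => ∑ T ∈ S.powerset, a T ≠ 0)
        = {∅} := by
      rw [powerset_empty, filter_singleton, if_pos]
      simpa [powerset_empty] using hT
    rw [this]
    simp
  | @insert x s hx IH =>
    intro r a ha ⟨T0, hT0⟩
    set g : Finset α → ZMod 2 := fun T => if x ∈ T then 0 else a T with hgdef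
    set h : Finset α → ZMod 2 := fun T => if x ∈ T then 0 else a (insert x T) with hhdef
    -- evaluation facts
    have eval_g : ∀ S ∈ s.powerset, ∑ T ∈ S.powerset, a T = ∑ T ∈ S.powerset, g T := by
      intro S hS
      refine Finset.sum_congr rfl fun T hT => ?_
      have hxT : x ∉ T := fun hxT => hx ((mem_powerset.mp hS) ((mem_powerset.mp hT) hxT))
      simp [hgdef, hxT]
    have eval_gh : ∀ S ∈ s.powerset, ∑ T ∈ (insert x S).powerset, a T
        = ∑ T ∈ S.powerset, (g T + h T) := by
      intro S hS
      have hxS : x ∉ S := fun hxS => hx ((mem_powerset.mp hS) hxS)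
      rw [Finset.sum_powerset_insert hxS, Finset.sum_add_distrib]
      congr 1
      · exact (eval_g S hS).symm ▸ rfl
      · refine Finset.sum_congr rfl fun T hT => ?_
        have hxT : x ∉ T := fun hxT => hxS ((mem_powerset.mp hT) hxT)
        simp [hhdef, hxT]
    -- count decomposition
    have hinj : Set.InjOn (insert x) (s.powerset : Set (Finset α)) := by
      intro A hA B hB hAB
      have hxA : x ∉ A := fun hc => hx (mem_powerset.mp hA hc)
      have hxB : x ∉ B := fun hc => hx (mem_powerset.mp hB hc)
      rw [← erase_insert hxA, ← erase_insert hxB, hAB]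
    have hcard : ((insert x s).powerset.filter (fun S => ∑ T ∈ S.powerset, a T ≠ 0)).card
        = (s.powerset.filter (fun S => ∑ T ∈ S.powerset, g T ≠ 0)).card
          + (s.powerset.filter (fun S => ∑ T ∈ S.powerset, (g T + h T) ≠ 0)).card := by
      rw [powerset_insert, filter_union, card_union_of_disjoint, filter_image,
        card_image_of_injOn (hinj.mono (filter_subset _ _))]
      · congr 1
        · congr 1; apply filter_congr; intro S hS; rw [eval_g S hS]
        · congr 1; apply filter_congr; intro S hS; rw [eval_gh S hS]
      · rw [filter_image]
        simp only [disjoint_left, mem_filter, mem_image, mem_powerset]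
        rintro A ⟨hA, _⟩ ⟨B, _, rfl⟩
        exact hx (hA (mem_insert_self x B))
    rw [hcard, card_insert_of_notMem hx]
    -- support facts
    have hgsupp : ∀ T, g T ≠ 0 → T ⊆ s ∧ T.card ≤ r := by
      intro T hT
      have hxT : x ∉ T := by intro hc; simp [hgdef, hc] at hT
      have := ha T (by simpa [hgdef, hxT] using hT)
      exact ⟨fun y hy => (mem_insert.mp (this.1 hy)).resolve_left (fun e => hxT (e ▸ hy)), this.2⟩
    have hhsupp : ∀ T, h T ≠ 0 → T ⊆ s ∧ T.card + 1 ≤ r := by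
      intro T hT
      have hxT : x ∉ T := by intro hc; simp [hhdef, hc] at hT
      have := ha (insert x T) (by simpa [hhdef, hxT] using hT)
      constructor
      · intro y hy
        exact (mem_insert.mp (this.1 (mem_insert_of_mem hy))).resolve_left
          (fun e => hxT (e ▸ hy))
      · rw [← card_insert_of_notMem hxT]; exact this.2
    by_cases hg0 : ∀ T, g T = 0
    · -- g = 0, so h ≠ 0 with support card ≤ r - 1
      have hh0 : ∃ T, h T ≠ 0 := by
        by_cases hxT0 : x ∈ T0
        · refine ⟨T0.erase x, ?_⟩
          simp [hhdef, Finset.insert_erase hxT0, hT0]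
        · exact absurd (hg0 T0) (by simpa [hgdef, hxT0] using hT0)
      obtain ⟨T1, hT1⟩ := hh0
      have hr1 : 1 ≤ r := le_trans (Nat.succ_le_succ (Nat.zero_le _)) (hhsupp T1 hT1).2
      have := IH (r - 1) h (fun T hT => ⟨(hhsupp T hT).1, by have := (hhsupp T hT).2; omega⟩) ⟨T1, hT1⟩
      have heq : (s.powerset.filter (fun S => ∑ T ∈ S.powerset, (g T + h T) ≠ 0)).card
          = (s.powerset.filter (fun S => ∑ T ∈ S.powerset, h T ≠ 0)).card := by
        congr 1
        apply filter_congr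
        intro S _
        simp [hg0]
      calc 2 ^ (s.card + 1 - r) ≤ 2 ^ (s.card - (r - 1)) := by
            apply Nat.pow_le_pow_right (by norm_num); omega
        _ ≤ (s.powerset.filter (fun S => ∑ T ∈ S.powerset, h T ≠ 0)).card := this
        _ ≤ _ := by rw [heq]; exact Nat.le_add_left _ _
    · push_neg at hg0
      by_cases hgh0 : ∀ T, g T + h T = 0
      · -- g = h pointwise, support card ≤ r - 1
        have hgh : ∀ T, g T = h T := by
          intro T
          have h2 := hgh0 T
          rw [← CharTwo.sub_eq_add] at h2
          exact sub_eq_zero.mp h2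
        obtain ⟨T1, hT1⟩ := hg0
        have hhT1 : h T1 ≠ 0 := (hgh T1) ▸ hT1
        have hr1 : 1 ≤ r := le_trans (Nat.succ_le_succ (Nat.zero_le _)) (hhsupp T1 hhT1).2
        have H1 := IH (r - 1) g (fun T hT => ⟨(hgsupp T hT).1,
          by have := (hhsupp T ((hgh T) ▸ hT)).2; omega⟩) ⟨T1, hT1⟩
        calc 2 ^ (s.card + 1 - r) ≤ 2 ^ (s.card - (r - 1)) := by
              apply Nat.pow_le_pow_right (by norm_num); omega
          _ ≤ (s.powerset.filter (fun S => ∑ T ∈ S.powerset, g T ≠ 0)).card := H1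
          _ ≤ _ := Nat.le_add_right _ _
      · push_neg at hgh0
        obtain ⟨T1, hT1⟩ := hg0
        obtain ⟨T2, hT2⟩ := hgh0
        have H1 := IH r g hgsupp ⟨T1, hT1⟩
        have hsupp2 : ∀ T, g T + h T ≠ 0 → T ⊆ s ∧ T.card ≤ r := by
          intro T hT
          by_cases hgT : g T = 0
          · have hhT : h T ≠ 0 := by simpa [hgT] using hT
            exact ⟨(hhsupp T hhT).1, by have := (hhsupp T hhT).2; omega⟩
          · exact hgsupp T hgT
        have H2 := IH r (fun T => g T + h T) hsupp2 ⟨T2, hT2⟩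
        calc 2 ^ (s.card + 1 - r) ≤ 2 ^ (s.card - r) + 2 ^ (s.card - r) := by
              rw [← two_mul, ← pow_succ']
              apply Nat.pow_le_pow_right (by norm_num); omega
          _ ≤ _ := Nat.add_le_add H1 H2

/-- The minimum distance of the binary shortened projective Reed–Muller
code PRM(r, m−1) equals `2^(m−r)`: (i) every nonzero coefficient vector (nonzero on some
r-element subset) yields a codeword of weight at least `2^(m−r)`; (ii) some nonzero
coefficient vector yields a codeword of weight exactly `2^(m−r)`. -/
theorem stmt_10 (m r : ℕ) (hm : 1 ≤ m) (hr : 1 ≤ r) (hrm : r ≤ m) :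
    (∀ a : Finset (Fin m) → ZMod 2, (∃ T : Finset (Fin m), T.card = r ∧ a T ≠ 0) →
      2 ^ (m - r) ≤ (Finset.univ.filter (fun S : Finset (Fin m) =>
          r ≤ S.card ∧ (∑ T ∈ S.powerset.filter (fun T => T.card = r), a T) ≠ 0)).card) ∧
    (∃ a : Finset (Fin m) → ZMod 2, (∃ T : Finset (Fin m), T.card = r ∧ a T ≠ 0) ∧
      (Finset.univ.filter (fun S : Finset (Fin m) =>
          r ≤ S.card ∧ (∑ T ∈ S.powerset.filter (fun T => T.card = r), a T) ≠ 0)).card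
        = 2 ^ (m - r)) := by
  constructor
  · intro a ⟨T0, hT0c, hT0⟩
    set a' : Finset (Fin m) → ZMod 2 := fun T => if T.card = r then a T else 0 with ha'
    have hsum : ∀ S : Finset (Fin m),
        ∑ T ∈ S.powerset.filter (fun T => T.card = r), a T = ∑ T ∈ S.powerset, a' T := by
      intro S
      rw [Finset.sum_filter]
    have hfeq : Finset.univ.filter (fun S : Finset (Fin m) =>
          r ≤ S.card ∧ (∑ T ∈ S.powerset.filter (fun T => T.card = r), a T) ≠ 0)
        = Finset.univ.filter (fun S : Finset (Fin m) => ∑ T ∈ S.powerset, a' T ≠ 0) := by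
      apply Finset.filter_congr
      intro S _
      rw [hsum S]
      constructor
      · exact fun h => h.2
      · intro h
        refine ⟨?_, h⟩
        rw [← hsum S] at h
        obtain ⟨T, hTmem, hTne⟩ := Finset.exists_ne_zero_of_sum_ne_zero h
        rw [Finset.mem_filter, Finset.mem_powerset] at hTmem
        exact hTmem.2 ▸ Finset.card_le_card hTmem.1
    rw [hfeq]
    have := rm_key (Finset.univ : Finset (Fin m)) r a'
      (fun T hT => ⟨Finset.subset_univ _, by
        by_contra hc
        exact hT (by simp only [ha']; rw [if_neg (by omega)])⟩)
      ⟨T0, by simp only [ha']; rw [if_pos hT0c]; exact hT0⟩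
    simpa [Finset.powerset_univ] using this
  · obtain ⟨R, -, hRc⟩ := Finset.exists_subset_card_eq (s := (Finset.univ : Finset (Fin m))) (n := r)
      (by simpa using hrm)
    refine ⟨fun T => if T = R then 1 else 0, ⟨R, hRc, by simp⟩, ?_⟩
    have hfeq : Finset.univ.filter (fun S : Finset (Fin m) =>
          r ≤ S.card ∧ (∑ T ∈ S.powerset.filter (fun T => T.card = r),
            (if T = R then (1 : ZMod 2) else 0)) ≠ 0)
        = Finset.univ.filter (fun S : Finset (Fin m) => R ⊆ S) := by
      apply Finset.filter_congr
      intro S _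
      rw [Finset.sum_ite_eq' (S.powerset.filter (fun T => T.card = r)) R (fun _ => (1 : ZMod 2))]
      simp only [Finset.mem_filter, Finset.mem_powerset, hRc]
      constructor
      · intro ⟨_, h⟩
        by_contra hc
        exact h (by rw [if_neg (by simp [hc])])
      · intro h
        refine ⟨hRc ▸ Finset.card_le_card h, ?_⟩
        rw [if_pos ⟨h, trivial⟩]
        decide
    rw [hfeq]
    have himg : Finset.univ.filter (fun S : Finset (Fin m) => R ⊆ S)
        = (Finset.univ \ R).powerset.image (fun T => R ∪ T) := by
      ext S
      simp only [Finset.mem_filter, Finset.mem_univ, true_and, Finset.mem_image,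
        Finset.mem_powerset]
      constructor
      · intro h
        exact ⟨S \ R, Finset.sdiff_subset_sdiff (Finset.subset_univ S) le_rfl,
          Finset.union_sdiff_of_subset h⟩
      · rintro ⟨T, -, rfl⟩
        exact Finset.subset_union_left
    rw [himg, Finset.card_image_of_injOn, Finset.card_powerset, Finset.card_sdiff_of_subset
      (Finset.subset_univ R), hRc, Finset.card_univ, Fintype.card_fin]
    intro A hA B hB hAB
    simp only [Finset.coe_powerset, Set.mem_preimage, Set.mem_powerset_iff,
      Finset.coe_subset, Finset.mem_coe] at hA hB
    have hAd : Disjoint R A := by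
      rw [Finset.subset_sdiff] at hA; exact hA.2.symm
    have hBd : Disjoint R B := by
      rw [Finset.subset_sdiff] at hB; exact hB.2.symm
    rw [← Finset.union_sdiff_cancel_left hAd, show R ∪ A = R ∪ B from hAB,
      Finset.union_sdiff_cancel_left hBd]
end

section
/- Let m ≥ 2, 1 ≤ r ≤ m − 1 and ℓ = m − r ≥ 1. Then the second generalized Hamming weight of the binary shortened projective Reed–Muller code PRM(r, m−1) is at most 3·2^{ℓ−1}: there exist two linearly independent coefficient vectors a and a' such that the set of coordinates S of [m] with |S| ≥ r at which f_a(S) ≠ 0 or f_{a'}(S) ≠ 0 has cardinality at most 3·2^{ℓ−1}. -/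
/-!
Take two `r`-sets `T₀ ≠ T₁` whose union has `r + 1` elements, and let `a`, `a'` be the unit
coefficient vectors at `T₀` and `T₁`. The codeword of a unit vector at `W` is the indicator of
the supersets of `W`, so the two codewords are independent (evaluate at `T₀` and `T₁`), and by
inclusion–exclusion the union of their supports has `2^ℓ + 2^ℓ - 2^(ℓ-1) = 3·2^(ℓ-1)` elements.
-/

open Finset

variable {α : Type*} [DecidableEq α]

lemma exists_card_eq_card_eq_ne_card_union_eq_succ [Fintype α] {r : ℕ} (hr : 1 ≤ r)
    (hrα : r < Fintype.card α) :
    ∃ T₀ T₁ : Finset α, #T₀ = r ∧ #T₁ = r ∧ T₀ ≠ T₁ ∧ #(T₀ ∪ T₁) = r + 1 := by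
  obtain ⟨U, -, hU⟩ := exists_subset_card_eq (s := (univ : Finset α)) (n := r + 1) (by simpa)
  obtain ⟨x, hx, y, hy, hxy⟩ := one_lt_card.mp (show 1 < #U by omega)
  refine ⟨U.erase x, U.erase y, by simp [card_erase_of_mem hx, hU],
    by simp [card_erase_of_mem hy, hU], fun h => ?_, ?_⟩
  · simpa [h] using mem_erase.mpr ⟨hxy.symm, hy⟩
  · rw [show U.erase x ∪ U.erase y = U by ext z; simp only [mem_union, mem_erase]; grind, hU]

section Supersets

variable [Fintype α]

lemma card_filter_superset (T : Finset α) :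
    #{S : Finset α | T ⊆ S} = 2 ^ (Fintype.card α - #T) := by
  rw [show ({S : Finset α | T ⊆ S} : Finset _) = Icc T univ by ext; simp,
    card_Icc_finset (subset_univ T), card_univ]

lemma card_filter_superset_or_superset_add (T₀ T₁ : Finset α) :
    #{S : Finset α | T₀ ⊆ S ∨ T₁ ⊆ S} + 2 ^ (Fintype.card α - #(T₀ ∪ T₁)) =
      2 ^ (Fintype.card α - #T₀) + 2 ^ (Fintype.card α - #T₁) := by
  have h := card_union_add_card_inter {S : Finset α | T₀ ⊆ S} {S | T₁ ⊆ S}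
  simp only [← filter_or, ← filter_and, ← union_subset_iff, card_filter_superset] at h
  exact h

end Supersets

/-- `prmEval r a` is the codeword `f_a` of `PRM(r, m - 1)`. -/
def prmEval {R : Type*} [AddCommMonoid R] (r : ℕ) (a : Finset α → R)
    (S : {S : Finset α // r ≤ #S}) : R :=
  ∑ T ∈ S.1.powerset.filter (fun T => T.card = r), a T

section UnitVectors

variable {R : Type*} {r : ℕ}

lemma prmEval_single [AddCommMonoidWithOne R] {W : Finset α} (hW : #W = r)
    (S : {S : Finset α // r ≤ #S}) :
    prmEval r (Pi.single W (1 : R)) S = if W ⊆ S.1 then 1 else 0 := by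
  simp [prmEval, sum_pi_single', hW]

lemma linearIndependent_prmEval_single_pair [Ring R] {W₀ W₁ : Finset α} (h₀ : #W₀ = r)
    (h₁ : #W₁ = r) (hne : W₀ ≠ W₁) :
    LinearIndependent R ![prmEval r (Pi.single W₀ (1 : R)), prmEval r (Pi.single W₁ 1)] := by
  have h₀₁ : ¬ W₀ ⊆ W₁ := fun h => hne (eq_of_subset_of_card_le h (h₁.trans h₀.symm).le)
  have h₁₀ : ¬ W₁ ⊆ W₀ := fun h => hne (eq_of_subset_of_card_le h (h₀.trans h₁.symm).le).symm
  rw [LinearIndependent.pair_iff]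
  intro s t hst
  have e₀ := congrFun hst ⟨W₀, h₀.ge⟩
  have e₁ := congrFun hst ⟨W₁, h₁.ge⟩
  simp only [Pi.add_apply, Pi.smul_apply, Pi.zero_apply, prmEval_single h₀, prmEval_single h₁,
    subset_refl, h₀₁, h₁₀, if_true, if_false, smul_eq_mul] at e₀ e₁
  simpa using And.intro e₀ e₁

lemma card_support_prmEval_single_pair [Fintype α] [AddCommMonoidWithOne R]
    [NeZero (1 : R)] [DecidableEq R] {W₀ W₁ : Finset α} (h₀ : #W₀ = r) (h₁ : #W₁ = r) :
    #{S : {S : Finset α // r ≤ #S} |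
        prmEval r (Pi.single W₀ (1 : R)) S ≠ 0 ∨ prmEval r (Pi.single W₁ (1 : R)) S ≠ 0} =
      #{S : Finset α | W₀ ⊆ S ∨ W₁ ⊆ S} := by
  refine card_bij (fun S _ => S.1) (fun S hS => ?_) (fun S _ T _ => Subtype.ext) (fun S hS => ?_)
  · simpa [prmEval_single h₀, prmEval_single h₁] using hS
  · have hS' : W₀ ⊆ S ∨ W₁ ⊆ S := by simpa using hS
    have hrS : r ≤ #S := hS'.elim (fun h => h₀ ▸ card_le_card h) (fun h => h₁ ▸ card_le_card h)
    exact ⟨⟨S, hrS⟩, by simpa [prmEval_single h₀, prmEval_single h₁] using hS', rfl⟩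

end UnitVectors

theorem stmt_11_general (m r : ℕ) (hr : 1 ≤ r) (hrm : r ≤ m - 1) :
    ∃ a a' : Finset (Fin m) → ZMod 2,
      LinearIndependent (ZMod 2)
        ![(fun S : {S : Finset (Fin m) // r ≤ S.card} =>
            ∑ T ∈ S.1.powerset.filter (fun T => T.card = r), a T),
          (fun S : {S : Finset (Fin m) // r ≤ S.card} =>
            ∑ T ∈ S.1.powerset.filter (fun T => T.card = r), a' T)] ∧
      (Finset.univ.filter (fun S : {S : Finset (Fin m) // r ≤ S.card} =>
          (∑ T ∈ S.1.powerset.filter (fun T => T.card = r), a T) ≠ 0 ∨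
          (∑ T ∈ S.1.powerset.filter (fun T => T.card = r), a' T) ≠ 0)).card
        ≤ 3 * 2 ^ (m - r - 1) := by
  obtain ⟨T₀, T₁, h₀, h₁, hne, hU⟩ :=
    exists_card_eq_card_eq_ne_card_union_eq_succ (α := Fin m) hr (by simp; omega)
  refine ⟨Pi.single T₀ 1, Pi.single T₁ 1, linearIndependent_prmEval_single_pair h₀ h₁ hne, ?_⟩
  refine (card_support_prmEval_single_pair h₀ h₁).trans_le ?_
  have hcount := card_filter_superset_or_superset_add T₀ T₁
  have hpow : 2 ^ (m - r) = 2 * 2 ^ (m - (r + 1)) := by rw [← pow_succ']; congr 1; omega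
  rw [h₀, h₁, hU, Fintype.card_fin, hpow] at hcount
  rw [Nat.sub_sub]
  omega

/-- The second generalized Hamming weight of the binary shortened
projective Reed–Muller code PRM(r, m−1) is at most `3·2^(ℓ−1)` (`ℓ = m − r ≥ 1`): there
exist coefficient vectors `a`, `a'` whose codewords are linearly independent and whose
union of supports has cardinality at most `3·2^(ℓ−1)`. -/
theorem stmt_11 (m r : ℕ) (hm : 2 ≤ m) (hr : 1 ≤ r) (hrm : r ≤ m - 1) :
    ∃ a a' : Finset (Fin m) → ZMod 2,
      LinearIndependent (ZMod 2)
        ![(fun S : {S : Finset (Fin m) // r ≤ S.card} =>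
            ∑ T ∈ S.1.powerset.filter (fun T => T.card = r), a T),
          (fun S : {S : Finset (Fin m) // r ≤ S.card} =>
            ∑ T ∈ S.1.powerset.filter (fun T => T.card = r), a' T)] ∧
      (Finset.univ.filter (fun S : {S : Finset (Fin m) // r ≤ S.card} =>
          (∑ T ∈ S.1.powerset.filter (fun T => T.card = r), a T) ≠ 0 ∨
          (∑ T ∈ S.1.powerset.filter (fun T => T.card = r), a' T) ≠ 0)).card
        ≤ 3 * 2 ^ (m - r - 1) :=
  stmt_11_general m r hr hrm
end

section
/- For all integers r ≥ 1 and ℓ ≥ 1, the following binomial identity holds: ∑_{j=0}^{ℓ−1} ∑_{i=0}^{r−1} C(r+ℓ−1−i, r+j−i) = (∑_{i=r}^{r+ℓ} C(r+ℓ, i)) − 2^ℓ. -/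
/-! For fixed `j < ℓ`, the inner sum over `i` is a hockey stick equal to `C(r+ℓ, ℓ-j) - C(ℓ, ℓ-j)`.
Summing over `j` gives `∑_{k=1}^{ℓ} C(r+ℓ, k) - (2^ℓ - 1)`, and by the symmetry `C(n, k) = C(n, n-k)`
the upper tail `∑_{i=r}^{r+ℓ} C(r+ℓ, i)` equals `∑_{k=0}^{ℓ} C(r+ℓ, k)`. -/

open Finset

lemma Finset.sum_range_reflect_add_apply_zero {M : Type*} [AddCommMonoid M] (f : ℕ → M) (l : ℕ) :
    ∑ j ∈ range l, f (l - j) + f 0 = ∑ k ∈ range (l + 1), f k := by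
  rw [sum_range_succ', ← sum_range_reflect (fun i => f (i + 1))]
  refine congrArg (· + f 0) (sum_congr rfl fun j hj => ?_)
  rw [mem_range] at hj
  congr 1
  omega

namespace Nat

lemma sum_range_add_choose_add_choose (l c r : ℕ) :
    ∑ i ∈ range r, (l + i).choose c + l.choose (c + 1) = (l + r).choose (c + 1) := by
  induction r with
  | zero => simp
  | succ r ih => rw [sum_range_succ, add_right_comm, ih, ← add_assoc, choose_succ_succ', add_comm]

lemma sum_Icc_choose_eq_sum_range (r l : ℕ) :
    ∑ i ∈ Icc r (r + l), (r + l).choose i = ∑ k ∈ range (l + 1), (r + l).choose k := by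
  have hsymm : ∀ i ∈ Ico r (r + l + 1), (r + l).choose i = (r + l).choose (r + l - i) :=
    fun i hi => (choose_symm (by simp at hi; omega)).symm
  rw [← Ico_add_one_right_eq_Icc, sum_congr rfl hsymm, sum_Ico_reflect _ _ le_rfl, range_eq_Ico]
  congr 2 <;> omega

/-- After `C(r+l-1-i, r+j-i) = C(r+l-1-i, l-1-j)` and `i ↦ r-1-i`, the inner sum is a hockey stick
`∑_{i<r} C(l+i, l-1-j)`. -/
lemma sum_range_choose_add_choose {r l j : ℕ} (hj : j < l) :
    ∑ i ∈ range r, (r + l - 1 - i).choose (r + j - i) + l.choose (l - j)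
      = (r + l).choose (l - j) := by
  have hsymm : ∀ i ∈ range r, (r + l - 1 - i).choose (r + j - i)
      = (l + (r - 1 - i)).choose (l - 1 - j) := by
    intro i hi
    rw [mem_range] at hi
    rw [← choose_symm (by omega)]
    congr 1 <;> omega
  rw [sum_congr rfl hsymm, sum_range_reflect (fun i => (l + i).choose (l - 1 - j)),
    show l - j = l - 1 - j + 1 by omega, sum_range_add_choose_add_choose, add_comm r]

end Nat

theorem stmt_12_general (r l : ℕ) :
    ((∑ j ∈ Finset.range l, ∑ i ∈ Finset.range r, (r + l - 1 - i).choose (r + j - i) : ℕ) : ℤ)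
      = ((∑ i ∈ Finset.Icc r (r + l), (r + l).choose i : ℕ) : ℤ) - 2 ^ l := by
  have hinner : ∑ j ∈ range l, ∑ i ∈ range r, (r + l - 1 - i).choose (r + j - i)
      + ∑ j ∈ range l, l.choose (l - j) = ∑ j ∈ range l, (r + l).choose (l - j) := by
    rw [← sum_add_distrib]
    exact sum_congr rfl fun j hj => Nat.sum_range_choose_add_choose (mem_range.mp hj)
  have hpow : ∑ j ∈ range l, l.choose (l - j) + 1 = 2 ^ l := by
    simpa [Nat.sum_range_choose] using sum_range_reflect_add_apply_zero l.choose l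
  have htail : ∑ j ∈ range l, (r + l).choose (l - j) + 1
      = ∑ i ∈ Icc r (r + l), (r + l).choose i := by
    simpa [Nat.sum_Icc_choose_eq_sum_range] using
      sum_range_reflect_add_apply_zero (r + l).choose l
  rw [← htail, ← hinner]
  zify at hpow
  rw [← hpow]
  push_cast
  ring

/-- For all integers `r ≥ 1` and `ℓ ≥ 1`,
`∑_{j=0}^{ℓ−1} ∑_{i=0}^{r−1} C(r+ℓ−1−i, r+j−i) = (∑_{i=r}^{r+ℓ} C(r+ℓ, i)) − 2^ℓ`. -/
theorem stmt_12 (r l : ℕ) (hr : 1 ≤ r) (hl : 1 ≤ l) :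
    ((∑ j ∈ Finset.range l, ∑ i ∈ Finset.range r, (r + l - 1 - i).choose (r + j - i) : ℕ) : ℤ)
      = ((∑ i ∈ Finset.Icc r (r + l), (r + l).choose i : ℕ) : ℤ) - 2 ^ l :=
  stmt_12_general r l
end

section
/- Let G = [I_k | P] be the generator matrix of a systematic binary linear code of length n and dimension k, with columns g₁,…,g_n ∈ F₂^k (so g_i = e_i for i ≤ k). Suppose that for every i ∈ {1,…,k} there exist two disjoint recovery sets R_{i,1}, R_{i,2} ⊆ {1,…,n} with R_{i,1} ∩ R_{i,2} = ∅, i ∉ R_{i,1} ∪ R_{i,2}, and ∑_{j ∈ R_{i,t}} g_j = e_i for t = 1, 2. Then every standard basis vector e_i of F₂^k lies in the linear span of the set X² = { g_a ⊙ g_b : k < a < b ≤ n }, where ⊙ denotes the componentwise (Hadamard) product of vectors in F₂^k. -/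
/-!
Split each recovery set `R_t` into its systematic part and its parity part `P_t`, and let
`u_t = ∑_{a ∈ P_t} g_a`. Since the systematic columns are unit vectors, `u_t = e_i - 𝟙_{S_t}`,
where `S_t ⊆ [k] ∖ {i}` records the systematic columns in `R_t`. As `S₁` and `S₂` are disjoint,
`u₁ ⊙ u₂ = e_i`, and expanding the product expresses `e_i` through the `g_a ⊙ g_b` with
`a ∈ P₁`, `b ∈ P₂`, which are distinct because `R₁` and `R₂` are disjoint.
-/

open Finset

theorem Finset.sum_mul_sum_mem_span_mul_of_disjoint {R M ι : Type*} [CommSemiring R]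
    [CommSemiring M] [Module R M] [LinearOrder ι] (g : ι → M) (p : ι → Prop)
    {A B : Finset ι} (hA : ∀ a ∈ A, p a) (hB : ∀ b ∈ B, p b) (hAB : Disjoint A B) :
    (∑ a ∈ A, g a) * (∑ b ∈ B, g b) ∈
      Submodule.span R {x | ∃ a b, p a ∧ a < b ∧ x = g a * g b} := by
  rw [sum_mul_sum]
  refine Submodule.sum_mem _ fun a ha => Submodule.sum_mem _ fun b hb => ?_
  have hab : a ≠ b := fun h => disjoint_left.mp hAB ha (h ▸ hb)
  rcases hab.lt_or_gt with hab | hba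
  · exact Submodule.subset_span ⟨a, b, hA a ha, hab, rfl⟩
  · exact Submodule.subset_span ⟨b, a, hB b hb, hba, mul_comm _ _⟩

section Systematic

variable {R : Type*} [CommRing R] {k n : ℕ} {hkn : k ≤ n} {g : Fin n → Fin k → R}

theorem sum_systematic_apply (hsys : ∀ i : Fin k, g (Fin.castLE hkn i) = Pi.single i 1)
    (T : Finset (Fin n)) (s : Fin k) :
    ∑ a ∈ T with a.val < k, g a s = if Fin.castLE hkn s ∈ T then 1 else 0 := by
  have hunit : ∀ a ∈ T.filter (·.val < k), g a s = if Fin.castLE hkn s = a then 1 else 0 := by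
    intro a ha
    have hak : (a : ℕ) < k := (mem_filter.mp ha).2
    obtain ⟨j, rfl⟩ : ∃ j, Fin.castLE hkn j = a := ⟨⟨a, hak⟩, rfl⟩
    simp only [hsys, Pi.single_apply, (Fin.castLE_injective hkn).eq_iff]
  rw [sum_congr rfl hunit, sum_ite_eq]
  simp only [mem_filter, Fin.val_castLE, s.isLt, and_true]

theorem sum_parity_apply (hsys : ∀ i : Fin k, g (Fin.castLE hkn i) = Pi.single i 1)
    (T : Finset (Fin n)) (s : Fin k) :
    (∑ a ∈ T with k ≤ a.val, g a) s =
      (∑ a ∈ T, g a) s - if Fin.castLE hkn s ∈ T then 1 else 0 := by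
  rw [← sum_systematic_apply hsys, eq_sub_iff_add_eq, Finset.sum_apply, Finset.sum_apply]
  simpa only [not_le] using sum_filter_add_sum_filter_not T (k ≤ ·.val) _

theorem sum_parity_mul_sum_parity
    (hsys : ∀ i : Fin k, g (Fin.castLE hkn i) = Pi.single i 1) {i : Fin k}
    {R₁ R₂ : Finset (Fin n)} (hd : Disjoint R₁ R₂)
    (hi₁ : Fin.castLE hkn i ∉ R₁) (hi₂ : Fin.castLE hkn i ∉ R₂)
    (hs₁ : ∑ j ∈ R₁, g j = Pi.single i 1) (hs₂ : ∑ j ∈ R₂, g j = Pi.single i 1) :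
    (∑ a ∈ R₁ with k ≤ a.val, g a) * (∑ b ∈ R₂ with k ≤ b.val, g b) = Pi.single i 1 := by
  funext s
  rw [Pi.mul_apply, sum_parity_apply hsys, sum_parity_apply hsys, hs₁, hs₂]
  by_cases hs : s = i
  · subst hs
    simp [hi₁, hi₂]
  · have hnot_both : ¬(Fin.castLE hkn s ∈ R₁ ∧ Fin.castLE hkn s ∈ R₂) :=
      fun h => disjoint_left.mp hd h.1 h.2
    simp only [Pi.single_apply, hs, if_false]
    split_ifs <;> simp_all

end Systematic

theorem stmt_13_general (k n : ℕ) (hkn : k ≤ n)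
    (g : Fin n → Fin k → ZMod 2)
    (hsys : ∀ i : Fin k, g (Fin.castLE hkn i) = Pi.single i 1)
    (hrec : ∀ i : Fin k, ∃ R₁ R₂ : Finset (Fin n),
      Disjoint R₁ R₂ ∧
      Fin.castLE hkn i ∉ R₁ ∧ Fin.castLE hkn i ∉ R₂ ∧
      (∑ j ∈ R₁, g j) = Pi.single i 1 ∧ (∑ j ∈ R₂, g j) = Pi.single i 1) :
    ∀ i : Fin k, (Pi.single i 1 : Fin k → ZMod 2) ∈
      Submodule.span (ZMod 2)
        { x : Fin k → ZMod 2 | ∃ a b : Fin n, k ≤ (a : ℕ) ∧ a < b ∧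
            x = fun s => g a s * g b s } := by
  intro i
  obtain ⟨R₁, R₂, hd, hi₁, hi₂, hs₁, hs₂⟩ := hrec i
  rw [← sum_parity_mul_sum_parity hsys hd hi₁ hi₂ hs₁ hs₂]
  exact sum_mul_sum_mem_span_mul_of_disjoint g _ (fun a ha => (mem_filter.mp ha).2)
    (fun b hb => (mem_filter.mp hb).2) (disjoint_filter_filter hd)

/-- Let `G = [I_k | P]` be the generator matrix of a systematic binary
linear code with columns `g₁,…,g_n ∈ F₂^k`.  If every `i ∈ [k]` has two disjoint recovery
sets `R₁, R₂ ⊆ [n]` not containing `i` with `∑_{j ∈ R_t} g_j = e_i`, then every `e_i`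
lies in the span of `X² = {g_a ⊙ g_b : k < a < b ≤ n}` (componentwise products of
distinct parity columns). -/
theorem stmt_13 (k n : ℕ) (hk : 1 ≤ k) (hkn : k ≤ n)
    (g : Fin n → Fin k → ZMod 2)
    (hsys : ∀ i : Fin k, g (Fin.castLE hkn i) = Pi.single i 1)
    (hrec : ∀ i : Fin k, ∃ R₁ R₂ : Finset (Fin n),
      Disjoint R₁ R₂ ∧
      Fin.castLE hkn i ∉ R₁ ∧ Fin.castLE hkn i ∉ R₂ ∧
      (∑ j ∈ R₁, g j) = Pi.single i 1 ∧ (∑ j ∈ R₂, g j) = Pi.single i 1) :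
    ∀ i : Fin k, (Pi.single i 1 : Fin k → ZMod 2) ∈
      Submodule.span (ZMod 2)
        { x : Fin k → ZMod 2 | ∃ a b : Fin n, k ≤ (a : ℕ) ∧ a < b ∧
            x = fun s => g a s * g b s } :=
  stmt_13_general k n hkn g hsys hrec
end

section
/- Let G = [I_k | P] be the generator matrix of a systematic binary linear code of length n and dimension k ≥ 1 that is a 3-server PIR code: for every i ∈ {1,…,k} there exist 3 pairwise disjoint nonempty subsets of {1,…,n} whose corresponding column sums of G each equal the standard basis vector e_i. Then k ≤ C(n−k, 2), and consequently n ≥ k + ⌈(√(8k+1) + 1)/2⌉. -/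
/-- For a systematic binary linear `(n, k)` code (generator matrix
`G = [I_k | P]` with columns `g₁,…,g_n`) that is a 3-server PIR code, we have
`k ≤ C(n−k, 2)` and consequently `n ≥ k + ⌈(√(8k+1) + 1)/2⌉`. -/
theorem stmt_14 (k n : ℕ) (hk : 1 ≤ k) (hkn : k ≤ n)
    (g : Fin n → Fin k → ZMod 2)
    (hsys : ∀ i : Fin k, g (Fin.castLE hkn i) = Pi.single i 1)
    (hpir : ∀ i : Fin k, ∃ R : Fin 3 → Finset (Fin n),
      (∀ t, (R t).Nonempty) ∧
      (∀ t₁ t₂, t₁ ≠ t₂ → Disjoint (R t₁) (R t₂)) ∧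
      (∀ t, (∑ j ∈ R t, g j) = Pi.single i 1)) :
    k ≤ (n - k).choose 2 ∧
    (k : ℤ) + ⌈(Real.sqrt (8 * (k : ℝ) + 1) + 1) / 2⌉ ≤ (n : ℤ) := by
  classical
  have h1 : k ≤ (n - k).choose 2 := by
    set par : Finset (Fin n) := Finset.univ.filter (fun j => k ≤ j.val) with hpar
    set Q : Finset (Fin k → ZMod 2) :=
      (par.powersetCard 2).image (fun s => fun x => ∏ j ∈ s, g j x) with hQ
    have hmem : ∀ i : Fin k,
        (Pi.single i 1 : Fin k → ZMod 2) ∈ Submodule.span (ZMod 2) (Q : Set (Fin k → ZMod 2)) := by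
      intro i
      obtain ⟨R, hne, hdis, hsum⟩ := hpir i
      set ci := Fin.castLE hkn i with hci
      obtain ⟨t1, t2, ht12, hc1, hc2⟩ :
          ∃ t1 t2 : Fin 3, t1 ≠ t2 ∧ ci ∉ R t1 ∧ ci ∉ R t2 := by
        by_cases h0 : ci ∈ R 0
        · exact ⟨1, 2, by decide,
            Finset.disjoint_left.mp (hdis 0 1 (by decide)) h0,
            Finset.disjoint_left.mp (hdis 0 2 (by decide)) h0⟩
        · by_cases h1 : ci ∈ R 1
          · exact ⟨0, 2, by decide, h0,
              Finset.disjoint_left.mp (hdis 1 2 (by decide)) h1⟩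
          · exact ⟨0, 1, by decide, h0, h1⟩
      have key : (Pi.single i 1 : Fin k → ZMod 2) =
          ∑ a ∈ (R t1).filter (fun j => k ≤ j.val),
            ∑ b ∈ (R t2).filter (fun j => k ≤ j.val),
              (fun x => g a x * g b x : Fin k → ZMod 2) := by
        funext x
        have happ : (∑ a ∈ (R t1).filter (fun j => k ≤ j.val),
            ∑ b ∈ (R t2).filter (fun j => k ≤ j.val),
              (fun x => g a x * g b x : Fin k → ZMod 2)) x
            = (∑ a ∈ (R t1).filter (fun j => k ≤ j.val), g a x) *
              (∑ b ∈ (R t2).filter (fun j => k ≤ j.val), g b x) := by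
          rw [Finset.sum_mul_sum]
          simp [Finset.sum_apply]
        rw [happ]
        have hu : ∀ t : Fin 3, ci ∉ R t →
            (∑ a ∈ (R t).filter (fun j => k ≤ j.val), g a x)
            = (Pi.single i 1 : Fin k → ZMod 2) x +
              (if Fin.castLE hkn x ∈ (R t).filter (fun j => ¬ k ≤ j.val) then 1 else 0) := by
          intro t ht
          have hsplit := Finset.sum_filter_add_sum_filter_not (R t)
            (fun j => k ≤ j.val) (fun j => g j x)
          have hRx : (∑ j ∈ R t, g j x) = (Pi.single i 1 : Fin k → ZMod 2) x := by
            have := congrFun (hsum t) x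
            simpa [Finset.sum_apply] using this
          have hS : (∑ j ∈ (R t).filter (fun j => ¬ k ≤ j.val), g j x)
              = (if Fin.castLE hkn x ∈ (R t).filter (fun j => ¬ k ≤ j.val) then 1 else 0) := by
            rw [← Finset.sum_ite_eq ((R t).filter (fun j => ¬ k ≤ j.val))
              (Fin.castLE hkn x) (fun _ => (1 : ZMod 2))]
            apply Finset.sum_congr rfl
            intro j hj
            have hjk : (j : ℕ) < k := by
              have := (Finset.mem_filter.mp hj).2
              omega
            have hgj : g j = Pi.single (⟨(j : ℕ), hjk⟩ : Fin k) 1 := by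
              have := hsys ⟨(j : ℕ), hjk⟩
              have hje : Fin.castLE hkn (⟨(j : ℕ), hjk⟩ : Fin k) = j := by
                ext; simp
              rwa [hje] at this
            rw [hgj, Pi.single_apply]
            have hiff : (x = (⟨(j : ℕ), hjk⟩ : Fin k)) ↔ (Fin.castLE hkn x = j) := by
              constructor
              · intro h; ext; simp [h]
              · intro h; ext
                have : ((Fin.castLE hkn x : Fin n) : ℕ) = (j : ℕ) := by rw [h]
                simpa using this
            simp only [hiff]
          have : (∑ a ∈ (R t).filter (fun j => k ≤ j.val), g a x)
              = (∑ j ∈ R t, g j x) - (∑ j ∈ (R t).filter (fun j => ¬ k ≤ j.val), g j x) := by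
            rw [← hsplit]; ring
          rw [this, hRx, hS, CharTwo.sub_eq_add]
        rw [hu t1 hc1, hu t2 hc2]
        by_cases hx : x = i
        · subst hx
          have e1 : Fin.castLE hkn x ∉ (R t1).filter (fun j => ¬ k ≤ j.val) := by
            intro h; exact hc1 (Finset.mem_filter.mp h).1
          have e2 : Fin.castLE hkn x ∉ (R t2).filter (fun j => ¬ k ≤ j.val) := by
            intro h; exact hc2 (Finset.mem_filter.mp h).1
          simp [e1, e2, hc1, hc2, hci ▸ hc1, hci ▸ hc2]
        · have hP : (Pi.single i 1 : Fin k → ZMod 2) x = 0 := Pi.single_eq_of_ne hx 1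
          rw [hP]
          have hnot : Fin.castLE hkn x ∉ R t1 ∨ Fin.castLE hkn x ∉ R t2 := by
            by_contra hcon
            push_neg at hcon
            exact (Finset.disjoint_left.mp (hdis t1 t2 ht12) hcon.1) hcon.2
          rcases hnot with h | h
          · have hnm : Fin.castLE hkn x ∉ (R t1).filter (fun j => ¬ k ≤ j.val) :=
              fun hm => h (Finset.mem_filter.mp hm).1
            rw [if_neg hnm]; ring
          · have hnm : Fin.castLE hkn x ∉ (R t2).filter (fun j => ¬ k ≤ j.val) :=
              fun hm => h (Finset.mem_filter.mp hm).1
            rw [if_neg hnm]; ring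
      rw [key]
      apply Submodule.sum_mem
      intro a ha
      apply Submodule.sum_mem
      intro b hb
      apply Submodule.subset_span
      have haR := Finset.mem_filter.mp ha
      have hbR := Finset.mem_filter.mp hb
      have hab : a ≠ b := by
        intro h
        exact Finset.disjoint_left.mp (hdis t1 t2 ht12) haR.1 (h ▸ hbR.1)
      refine Finset.mem_coe.mpr (Finset.mem_image.mpr ⟨{a, b}, ?_, ?_⟩)
      · rw [Finset.mem_powersetCard]
        constructor
        · intro j hj
          rcases Finset.mem_insert.mp hj with h | h
          · subst h; exact Finset.mem_filter.mpr ⟨Finset.mem_univ _, haR.2⟩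
          · rw [Finset.mem_singleton] at h
            subst h; exact Finset.mem_filter.mpr ⟨Finset.mem_univ _, hbR.2⟩
        · exact Finset.card_pair hab
      · funext x
        rw [Finset.prod_pair hab]
    -- counting
    have hpk : par.card = n - k := by
      have himg : par = Finset.image
          (fun j : Fin (n - k) => (⟨k + (j : ℕ), by omega⟩ : Fin n)) Finset.univ := by
        ext j
        simp only [hpar, Finset.mem_filter, Finset.mem_univ, true_and, Finset.mem_image]
        constructor
        · intro hj
          exact ⟨⟨(j : ℕ) - k, by omega⟩, by ext; simp; omega⟩
        · rintro ⟨i, rfl⟩; simp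
      rw [himg, Finset.card_image_of_injective _ ?_, Finset.card_univ, Fintype.card_fin]
      intro a b hab
      have : k + (a : ℕ) = k + (b : ℕ) := congrArg Fin.val hab
      ext; omega
    have li0 : LinearIndependent (ZMod 2)
        (fun i : Fin k => (Pi.single i 1 : Fin k → ZMod 2)) := by
      have h := (Pi.basisFun (ZMod 2) (Fin k)).linearIndependent
      have he : ⇑(Pi.basisFun (ZMod 2) (Fin k)) = fun i : Fin k => (Pi.single i 1 : Fin k → ZMod 2) :=
        funext fun i => Pi.basisFun_apply (ZMod 2) (Fin k) i
      rwa [he] at h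
    set W := Submodule.span (ZMod 2) (Q : Set (Fin k → ZMod 2)) with hW
    have li : LinearIndependent (ZMod 2)
        (fun i : Fin k => (⟨Pi.single i 1, hmem i⟩ : W)) := by
      apply LinearIndependent.of_comp W.subtype
      exact li0
    have hfr : k ≤ Module.finrank (ZMod 2) W := by
      simpa using li.fintype_card_le_finrank
    have hfr2 : Module.finrank (ZMod 2) W ≤ Q.card := finrank_span_finset_le_card Q
    have hQc : Q.card ≤ (n - k).choose 2 := by
      calc Q.card ≤ (par.powersetCard 2).card := Finset.card_image_le
        _ = par.card.choose 2 := Finset.card_powersetCard 2 par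
        _ = (n - k).choose 2 := by rw [hpk]
    omega
  refine ⟨h1, ?_⟩
  set r := n - k with hr
  have hr2 : 2 ≤ r := by
    rcases Nat.lt_or_ge r 2 with h | h
    · have h0 : r.choose 2 = 0 := Nat.choose_eq_zero_of_lt h
      have h1' : k ≤ r.choose 2 := h1
      omega
    · exact h
  have h2k : 2 * k ≤ r * (r - 1) := by
    have hc : r.choose 2 * 2 = r * (r - 1) := by
      rw [Nat.choose_two_right]
      apply Nat.div_mul_cancel
      have : Even ((r - 1) * ((r - 1) + 1)) := Nat.even_mul_succ_self (r - 1)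
      have h' : (r - 1) + 1 = r := by omega
      rw [h'] at this
      rw [mul_comm]
      exact this.two_dvd
    omega
  have hrR : (2 : ℝ) * k ≤ (r : ℝ) * ((r : ℝ) - 1) := by
    have : ((2 * k : ℕ) : ℝ) ≤ ((r * (r - 1) : ℕ) : ℝ) := Nat.cast_le.mpr h2k
    push_cast [Nat.cast_sub (by omega : 1 ≤ r)] at this
    linarith
  have hrpos : (2 : ℝ) ≤ (r : ℝ) := by exact_mod_cast hr2
  have hsq : Real.sqrt (8 * (k : ℝ) + 1) ≤ 2 * (r : ℝ) - 1 := by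
    have hle : 8 * (k : ℝ) + 1 ≤ (2 * (r : ℝ) - 1) ^ 2 := by nlinarith
    calc Real.sqrt (8 * (k : ℝ) + 1) ≤ Real.sqrt ((2 * (r : ℝ) - 1) ^ 2) :=
          Real.sqrt_le_sqrt hle
      _ = 2 * (r : ℝ) - 1 := Real.sqrt_sq (by linarith)
  have hceil : ⌈(Real.sqrt (8 * (k : ℝ) + 1) + 1) / 2⌉ ≤ (r : ℤ) := by
    apply Int.ceil_le.mpr
    push_cast
    linarith
  have : (k : ℤ) + (r : ℤ) ≤ (n : ℤ) := by
    have : k + r = n := by omega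
    exact_mod_cast this.le
  omega
end

section
/- Let τ ≥ 3 and let G = [I_k | P] be the generator matrix of a systematic binary linear code of length n and dimension k ≥ 1 that is a τ-server PIR code. Then n ≥ k + ⌈(√(8k+1) + 1)/2⌉ + τ − 3. -/
open Finset


/-- Core lemma (τ=3 case, abstract form): if each of `k` indices has two disjoint
subsets of `A` whose column sums have coordinatewise product `e_i`, then `2k ≤ |A|(|A|-1)`. -/
lemma pir_core {n k : ℕ} (f : Fin n → Fin k → ZMod 2) (A : Finset (Fin n))
    (T₁ T₂ : Fin k → Finset (Fin n))
    (hsub1 : ∀ i, T₁ i ⊆ A) (hsub2 : ∀ i, T₂ i ⊆ A)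
    (hdisj : ∀ i, Disjoint (T₁ i) (T₂ i))
    (hid : ∀ i j, (∑ c ∈ T₁ i, f c j) * (∑ c ∈ T₂ i, f c j) = (Pi.single i 1 : Fin k → ZMod 2) j) :
    2 * k ≤ A.card * (A.card - 1) := by
  classical
  set P : Finset (Fin n × Fin n) := (A ×ˢ A).filter (fun p => p.1 < p.2) with hP
  set P' : Finset (Fin n × Fin n) := (A ×ˢ A).filter (fun p => p.2 < p.1) with hP'
  -- indicators
  set y : Fin k → Fin n → ZMod 2 := fun i c => if c ∈ T₁ i then 1 else 0 with hy
  set z : Fin k → Fin n → ZMod 2 := fun i c => if c ∈ T₂ i then 1 else 0 with hz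
  have hyz : ∀ i a, y i a * z i a = 0 := by
    intro i a
    by_cases h1 : a ∈ T₁ i
    · have h2 : a ∉ T₂ i := Finset.disjoint_left.mp (hdisj i) h1
      simp [hy, hz, h1, h2]
    · simp [hy, hz, h1]
  -- key identity
  have key : ∀ i j, ∑ p ∈ P, (f p.1 j * f p.2 j) * (y i p.1 * z i p.2 + y i p.2 * z i p.1)
      = (Pi.single i 1 : Fin k → ZMod 2) j := by
    intro i j
    set G : Fin n → Fin n → ZMod 2 := fun a b => (f a j * y i a) * (f b j * z i b) with hG
    have hsummand : ∀ p : Fin n × Fin n,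
        (f p.1 j * f p.2 j) * (y i p.1 * z i p.2 + y i p.2 * z i p.1)
          = G p.1 p.2 + G p.2 p.1 := by
      intro p; simp only [hG]; ring
    have htot : ∑ p ∈ A ×ˢ A, G p.1 p.2 = (Pi.single i 1 : Fin k → ZMod 2) j := by
      rw [Finset.sum_product]
      have hinner : ∀ a ∈ A, ∑ b ∈ A, G a b = (f a j * y i a) * (∑ c ∈ T₂ i, f c j) := by
        intro a _
        have h1 : ∀ b ∈ A, G a b = (f a j * y i a) * (if b ∈ T₂ i then f b j else 0) := by
          intro b _
          show (f a j * y i a) * (f b j * z i b) = _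
          simp only [hz]
          split <;> ring
        rw [Finset.sum_congr rfl h1, ← Finset.mul_sum]
        congr 1
        rw [← Finset.sum_filter, Finset.filter_mem_eq_inter,
          Finset.inter_eq_right.mpr (hsub2 i)]
      rw [Finset.sum_congr rfl hinner, ← Finset.sum_mul]
      have h2 : ∀ a ∈ A, f a j * y i a = (if a ∈ T₁ i then f a j else 0) := by
        intro a _
        simp only [hy]
        split <;> ring
      rw [Finset.sum_congr rfl h2, ← Finset.sum_filter, Finset.filter_mem_eq_inter,
        Finset.inter_eq_right.mpr (hsub1 i)]
      exact hid i j
    -- split A ×ˢ A into P, P', diagonal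
    have hsplit1 : ∑ p ∈ A ×ˢ A, G p.1 p.2
        = ∑ p ∈ P, G p.1 p.2 + ∑ p ∈ (A ×ˢ A).filter (fun p => ¬ p.1 < p.2), G p.1 p.2 := by
      rw [← Finset.sum_filter_add_sum_filter_not (A ×ˢ A) (fun p => p.1 < p.2)]
    have hsplit2 : ∑ p ∈ (A ×ˢ A).filter (fun p => ¬ p.1 < p.2), G p.1 p.2
        = ∑ p ∈ P', G p.1 p.2 := by
      rw [← Finset.sum_filter_add_sum_filter_not ((A ×ˢ A).filter (fun p => ¬ p.1 < p.2))
        (fun p => p.2 < p.1)]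
      have e1 : ((A ×ˢ A).filter (fun p => ¬ p.1 < p.2)).filter (fun p => p.2 < p.1) = P' := by
        rw [Finset.filter_filter, hP']
        apply Finset.filter_congr
        intro p _
        constructor
        · rintro ⟨_, h⟩; exact h
        · intro h; exact ⟨not_lt_of_gt h, h⟩
      have e2 : ∑ p ∈ ((A ×ˢ A).filter (fun p => ¬ p.1 < p.2)).filter (fun p => ¬ p.2 < p.1),
          G p.1 p.2 = 0 := by
        apply Finset.sum_eq_zero
        intro p hp
        simp only [Finset.mem_filter] at hp
        have : p.1 = p.2 := le_antisymm (not_lt.mp hp.2) (not_lt.mp hp.1.2)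
        simp only [hG, ← this]
        calc f p.1 j * y i p.1 * (f p.1 j * z i p.1)
            = (f p.1 j * f p.1 j) * (y i p.1 * z i p.1) := by ring
          _ = 0 := by rw [hyz i p.1, mul_zero]
      rw [e1, e2, add_zero]
    have hswap : ∑ p ∈ P', G p.1 p.2 = ∑ p ∈ P, G p.2 p.1 := by
      apply Finset.sum_nbij' (fun p => Prod.swap p) (fun p => Prod.swap p)
      · intro a ha
        simp only [hP, hP', Finset.mem_filter, Finset.mem_product] at *
        exact ⟨⟨ha.1.2, ha.1.1⟩, ha.2⟩
      · intro a ha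
        simp only [hP, hP', Finset.mem_filter, Finset.mem_product] at *
        exact ⟨⟨ha.1.2, ha.1.1⟩, ha.2⟩
      · intro a _; simp
      · intro a _; simp
      · intro a _; simp
    rw [Finset.sum_congr rfl (fun p _ => hsummand p), Finset.sum_add_distrib,
      ← hswap, ← hsplit2, ← hsplit1]
    exact htot
  -- linear independence
  set v : Fin k → (↥P → ZMod 2) := fun i s => y i s.1.1 * z i s.1.2 + y i s.1.2 * z i s.1.1
    with hv
  have hli : LinearIndependent (ZMod 2) v := by
    rw [Fintype.linearIndependent_iff]
    intro c hc j
    have hcs : ∀ s : ↥P, ∑ i, c i * (y i s.1.1 * z i s.1.2 + y i s.1.2 * z i s.1.1) = 0 := by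
      intro s
      have := congrFun hc s
      rw [Finset.sum_apply] at this
      simpa [hv] using this
    have hzero : ∀ p ∈ P,
        (f p.1 j * f p.2 j) * ∑ i, c i * (y i p.1 * z i p.2 + y i p.2 * z i p.1) = 0 := by
      intro p hp
      rw [show (∑ i, c i * (y i p.1 * z i p.2 + y i p.2 * z i p.1)) = 0 from hcs ⟨p, hp⟩,
        mul_zero]
    have step1 : (c j : ZMod 2) = ∑ i, c i * ((Pi.single i 1 : Fin k → ZMod 2) j) := by
      rw [Finset.sum_congr rfl (fun i _ => by rw [Pi.single_apply, mul_ite, mul_one, mul_zero])]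
      rw [Finset.sum_ite_eq Finset.univ j c]
      simp
    rw [step1, Finset.sum_congr rfl (fun i (_ : i ∈ Finset.univ) => by rw [← key i j])]
    have step2 : ∑ i : Fin k, c i * ∑ p ∈ P,
        f p.1 j * f p.2 j * (y i p.1 * z i p.2 + y i p.2 * z i p.1)
        = ∑ p ∈ P, (f p.1 j * f p.2 j) * ∑ i : Fin k,
            c i * (y i p.1 * z i p.2 + y i p.2 * z i p.1) := by
      simp_rw [Finset.mul_sum]
      rw [Finset.sum_comm]
      apply Finset.sum_congr rfl
      intro p _
      apply Finset.sum_congr rfl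
      intro i _
      ring
    rw [step2]
    exact Finset.sum_eq_zero hzero
  have hk_le : k ≤ P.card := by
    have h1 := hli.fintype_card_le_finrank
    rwa [Module.finrank_fintype_fun_eq_card, Fintype.card_coe, Fintype.card_fin] at h1
  -- cardinality: 2 * P.card = A.card^2 - A.card
  have hcard_eq : P.card = P'.card := by
    apply Finset.card_nbij' (fun p => Prod.swap p) (fun p => Prod.swap p)
    · intro a ha
      simp only [hP, hP', Finset.mem_coe, Finset.mem_filter, Finset.mem_product] at *
      exact ⟨⟨ha.1.2, ha.1.1⟩, ha.2⟩
    · intro a ha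
      simp only [hP, hP', Finset.mem_coe, Finset.mem_filter, Finset.mem_product] at *
      exact ⟨⟨ha.1.2, ha.1.1⟩, ha.2⟩
    · intro a _; simp
    · intro a _; simp
  have hunion : P ∪ P' = A.offDiag := by
    ext p
    simp only [hP, hP', Finset.mem_union, Finset.mem_filter, Finset.mem_product,
      Finset.mem_offDiag]
    constructor
    · rintro (⟨⟨h1, h2⟩, h3⟩ | ⟨⟨h1, h2⟩, h3⟩)
      · exact ⟨h1, h2, ne_of_lt h3⟩
      · exact ⟨h1, h2, (ne_of_lt h3).symm⟩
    · rintro ⟨h1, h2, h3⟩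
      rcases lt_or_gt_of_ne h3 with h | h
      · exact Or.inl ⟨⟨h1, h2⟩, h⟩
      · exact Or.inr ⟨⟨h1, h2⟩, h⟩
  have hdisjPP : Disjoint P P' := by
    rw [Finset.disjoint_left]
    intro p hp hp'
    simp only [hP, hP', Finset.mem_filter] at hp hp'
    exact absurd hp'.2 (not_lt_of_gt hp.2)
  have h2P : 2 * P.card = A.card * A.card - A.card := by
    have := Finset.card_union_of_disjoint hdisjPP
    rw [hunion, Finset.offDiag_card] at this
    omega
  have hfinal : A.card * A.card - A.card = A.card * (A.card - 1) := by
    cases A.card with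
    | zero => simp
    | succ t => rw [Nat.succ_sub_one, Nat.mul_succ, Nat.add_sub_cancel]
  omega

lemma pir_abstract {n k : ℕ} (f : Fin n → Fin k → ZMod 2) :
    ∀ (s : ℕ) (A : Finset (Fin n)) (T : Fin k → Fin (s + 2) → Finset (Fin n)),
    (∀ i t, T i t ⊆ A) →
    (∀ i t t', t ≠ t' → Disjoint (T i t) (T i t')) →
    (∀ i t t', t ≠ t' → ∀ j, (∑ c ∈ T i t, f c j) * (∑ c ∈ T i t', f c j)
      = (Pi.single i 1 : Fin k → ZMod 2) j) →
    2 * k ≤ (A.card - s) * (A.card - s - 1) := by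
  intro s
  induction s with
  | zero =>
    intro A T hsub hdisj hid
    have := pir_core f A (fun i => T i 0) (fun i => T i 1)
      (fun i => hsub i 0) (fun i => hsub i 1)
      (fun i => hdisj i 0 1 (by decide))
      (fun i j => hid i 0 1 (by decide) j)
    simpa using this
  | succ s ih =>
    intro A T hsub hdisj hid
    rcases Nat.eq_zero_or_pos k with hk0 | hk0
    · subst hk0; simp
    · -- find a column a ∈ A
      have i₀ : Fin k := ⟨0, hk0⟩
      have hne01 : (⟨0, by omega⟩ : Fin (s + 3)) ≠ ⟨1, by omega⟩ := by
        simp [Fin.ext_iff]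
      have h1 := hid i₀ ⟨0, by omega⟩ ⟨1, by omega⟩ hne01 i₀
      rw [Pi.single_eq_same] at h1
      have hTne : (T i₀ ⟨0, by omega⟩).Nonempty := by
        rcases Finset.eq_empty_or_nonempty (T i₀ ⟨0, by omega⟩) with he | hne
        · rw [he] at h1; simp at h1
        · exact hne
      obtain ⟨a, ha⟩ := hTne
      have haA : a ∈ A := hsub i₀ _ ha
      -- index avoiding the (at most one) set containing a
      classical
      have hpick : ∀ i, ∃ t₀ : Fin (s + 3), ∀ u, a ∉ T i (t₀.succAbove u) := by
        intro i
        by_cases hex : ∃ t, a ∈ T i t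
        · refine ⟨hex.choose, fun u hmem => ?_⟩
          exact Finset.disjoint_left.mp (hdisj i _ _ (Fin.succAbove_ne _ u)) hmem
            hex.choose_spec
        · exact ⟨⟨0, by omega⟩, fun u hmem => hex ⟨_, hmem⟩⟩
      choose t₀ hne using hpick
      have := ih (A.erase a) (fun i u => T i ((t₀ i).succAbove u))
        (fun i u => Finset.subset_erase.mpr ⟨hsub i _, hne i u⟩)
        (fun i u u' huu' => hdisj i _ _ (fun h => huu' (Fin.succAbove_right_injective h)))
        (fun i u u' huu' j => hid i _ _ (fun h => huu' (Fin.succAbove_right_injective h)) j)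
      rw [Finset.card_erase_of_mem haA] at this
      have hcard : A.card - 1 - s = A.card - (s + 1) := by omega
      rwa [hcard] at this

/-- For `τ ≥ 3`, a systematic binary linear `(n, k)` code (generator
matrix `G = [I_k | P]`) that is a τ-server PIR code satisfies
`n ≥ k + ⌈(√(8k+1) + 1)/2⌉ + τ − 3`. -/
theorem stmt_15 (τ k n : ℕ) (hτ : 3 ≤ τ) (hk : 1 ≤ k) (hkn : k ≤ n)
    (g : Fin n → Fin k → ZMod 2)
    (hsys : ∀ i : Fin k, g (Fin.castLE hkn i) = Pi.single i 1)
    (hpir : ∀ i : Fin k, ∃ R : Fin τ → Finset (Fin n),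
      (∀ t, (R t).Nonempty) ∧
      (∀ t₁ t₂, t₁ ≠ t₂ → Disjoint (R t₁) (R t₂)) ∧
      (∀ t, (∑ j ∈ R t, g j) = Pi.single i 1)) :
    (k : ℤ) + ⌈(Real.sqrt (8 * (k : ℝ) + 1) + 1) / 2⌉ + (τ : ℤ) - 3 ≤ (n : ℤ) := by
  classical
  obtain ⟨m, rfl⟩ : ∃ m, τ = m + 3 := ⟨τ - 3, by omega⟩
  choose R hRne hRdisj hRsum using hpir
  set A : Finset (Fin n) := Finset.univ.filter (fun c : Fin n => k ≤ c.val) with hA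
  have hAcard : A.card = n - k := by
    have h1 : (Finset.univ.filter (fun c : Fin n => ¬ k ≤ c.val)).card = k := by
      have himg : Finset.univ.filter (fun c : Fin n => ¬ k ≤ c.val)
          = Finset.univ.image (Fin.castLE hkn) := by
        ext c
        simp only [Finset.mem_filter, Finset.mem_univ, true_and, Finset.mem_image, not_le]
        constructor
        · intro h; exact ⟨⟨c.val, h⟩, Fin.ext rfl⟩
        · rintro ⟨i, rfl⟩; exact i.isLt
      rw [himg, Finset.card_image_of_injective _ (Fin.castLE_injective hkn),
        Finset.card_univ, Fintype.card_fin]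
    have h2 := Finset.card_filter_add_card_filter_not
      (s := (Finset.univ : Finset (Fin n))) (fun c : Fin n => k ≤ c.val)
    rw [Finset.card_univ, Fintype.card_fin] at h2
    rw [h1, ← hA] at h2
    omega
  have hpick : ∀ i : Fin k, ∃ t₀ : Fin (m + 3),
      ∀ u : Fin (m + 2), Fin.castLE hkn i ∉ R i (t₀.succAbove u) := by
    intro i
    by_cases hex : ∃ t, Fin.castLE hkn i ∈ R i t
    · refine ⟨hex.choose, fun u hmem => ?_⟩
      exact Finset.disjoint_left.mp (hRdisj i _ _ (Fin.succAbove_ne _ u)) hmem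
        hex.choose_spec
    · exact ⟨⟨0, by omega⟩, fun u hmem => hex ⟨_, hmem⟩⟩
  choose t₀ hnotin using hpick
  set T : Fin k → Fin (m + 2) → Finset (Fin n) :=
    fun i u => (R i ((t₀ i).succAbove u)).filter (fun c => k ≤ c.val) with hT
  have hsumT : ∀ (i : Fin k) (u : Fin (m + 2)) (j : Fin k),
      (∑ c ∈ T i u, g c j) = (Pi.single i 1 : Fin k → ZMod 2) j
        + (if Fin.castLE hkn j ∈ R i ((t₀ i).succAbove u) then (1 : ZMod 2) else 0) := by
    intro i u j
    have hsplit := Finset.sum_filter_add_sum_filter_not (R i ((t₀ i).succAbove u))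
      (fun c => k ≤ c.val) (fun c => g c j)
    have htotal : (∑ c ∈ R i ((t₀ i).succAbove u), g c j)
        = (Pi.single i 1 : Fin k → ZMod 2) j := by
      rw [← Finset.sum_apply j (R i ((t₀ i).succAbove u)) (fun c => g c), hRsum i _]
    have hSpart : ∑ c ∈ (R i ((t₀ i).succAbove u)).filter (fun c => ¬ k ≤ c.val), g c j
        = (if Fin.castLE hkn j ∈ R i ((t₀ i).succAbove u) then (1 : ZMod 2) else 0) := by
      have hterm : ∀ c ∈ (R i ((t₀ i).succAbove u)).filter (fun c => ¬ k ≤ c.val),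
          g c j = (if Fin.castLE hkn j = c then (1 : ZMod 2) else 0) := by
        intro c hc
        rw [Finset.mem_filter] at hc
        have hck : c.val < k := by omega
        have hc2 : c = Fin.castLE hkn ⟨c.val, hck⟩ := Fin.ext rfl
        rw [hc2, hsys ⟨c.val, hck⟩]
        simp [Pi.single_apply, Fin.ext_iff]
      rw [Finset.sum_congr rfl hterm,
        Finset.sum_ite_eq ((R i ((t₀ i).succAbove u)).filter (fun c => ¬ k ≤ c.val))
          (Fin.castLE hkn j) (fun _ => (1 : ZMod 2))]
      congr 1
      simp only [Finset.mem_filter, eq_iff_iff]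
      constructor
      · rintro ⟨h, _⟩; exact h
      · intro h; exact ⟨h, by simp⟩
    have h3 : (∑ c ∈ T i u, g c j)
        + (if Fin.castLE hkn j ∈ R i ((t₀ i).succAbove u) then (1 : ZMod 2) else 0)
        = (Pi.single i 1 : Fin k → ZMod 2) j := by
      rw [← hSpart, hT]
      rw [hsplit, htotal]
    have h4 := eq_sub_of_add_eq h3
    rwa [sub_eq_add_neg, CharTwo.neg_eq] at h4
  have hsubT : ∀ i u, T i u ⊆ A := by
    intro i u c hc
    rw [hT] at hc
    rw [Finset.mem_filter] at hc
    rw [hA, Finset.mem_filter]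
    exact ⟨Finset.mem_univ c, hc.2⟩
  have hdisjT : ∀ i u u', u ≠ u' → Disjoint (T i u) (T i u') := by
    intro i u u' huu'
    rw [hT]
    exact Finset.disjoint_filter_filter
      (hRdisj i _ _ (fun h => huu' (Fin.succAbove_right_injective h)))
  have hidT : ∀ i u u', u ≠ u' → ∀ j,
      (∑ c ∈ T i u, g c j) * (∑ c ∈ T i u', g c j)
        = (Pi.single i 1 : Fin k → ZMod 2) j := by
    intro i u u' huu' j
    rw [hsumT i u j, hsumT i u' j]
    by_cases hji : j = i
    · subst hji
      rw [Pi.single_eq_same, if_neg (hnotin j u), if_neg (hnotin j u')]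
      norm_num
    · rw [Pi.single_eq_of_ne hji]
      by_cases hm : Fin.castLE hkn j ∈ R i ((t₀ i).succAbove u)
      · have hm' : Fin.castLE hkn j ∉ R i ((t₀ i).succAbove u') :=
          Finset.disjoint_left.mp
            (hRdisj i _ _ (fun h => huu' (Fin.succAbove_right_injective h))) hm
        simp [hm, hm']
      · simp [hm]
  have habs := pir_abstract g m A T hsubT hdisjT hidT
  set d : ℕ := A.card - m with hd
  have hd2 : 2 ≤ d := by
    by_contra h
    push_neg at h
    interval_cases d <;> omega
  have hn : k + m + d ≤ n := by omega
  have hceil : (⌈(Real.sqrt (8 * (k : ℝ) + 1) + 1) / 2⌉ : ℤ) ≤ (d : ℤ) := by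
    rw [Int.ceil_le]
    push_cast
    rw [div_le_iff₀ (by norm_num : (0 : ℝ) < 2)]
    have hcast : (2 * (k : ℝ)) ≤ (d : ℝ) * ((d : ℝ) - 1) := by
      calc (2 * (k : ℝ)) = ((2 * k : ℕ) : ℝ) := by push_cast; ring
        _ ≤ ((d * (d - 1) : ℕ) : ℝ) := by exact_mod_cast habs
        _ = (d : ℝ) * ((d : ℝ) - 1) := by
            push_cast [Nat.cast_sub (by omega : 1 ≤ d)]; ring
    have h2 : (0 : ℝ) ≤ 2 * (d : ℝ) - 1 := by
      have : (2 : ℝ) ≤ (d : ℝ) := by exact_mod_cast hd2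
      linarith
    have hsq : Real.sqrt (8 * (k : ℝ) + 1) ≤ 2 * (d : ℝ) - 1 := by
      have h1 : (8 * (k : ℝ) + 1) ≤ (2 * (d : ℝ) - 1) ^ 2 := by nlinarith
      calc Real.sqrt (8 * (k : ℝ) + 1) ≤ Real.sqrt ((2 * (d : ℝ) - 1) ^ 2) :=
            Real.sqrt_le_sqrt h1
        _ = 2 * (d : ℝ) - 1 := Real.sqrt_sq h2
    linarith
  have hnz : (k : ℤ) + (m : ℤ) + (d : ℤ) ≤ (n : ℤ) := by exact_mod_cast hn
  push_cast
  linarith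
end
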